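/- arXiv:1801.05177 — 10 statements merged into one kernel-verified Lean document; each statement's English description precedes it below -/
import Mathlib

section
/- Let D be a strongly connected balanced bipartite digraph of order 2a ≥ 6 with partite sets X and Y. If d(x) + d(y) ≥ 3a for every pair of distinct vertices x, y either both in X or both in Y, then D contains a cycle of length 2 (i.e., a pair of vertices joined by arcs in both directions). -/
open Finset

section Defs

variable {V : Type*}

/-- `D` contains a directed cycle of length `k` (`k ≥ 2`): an injective map from
`ZMod k` such that consecutive vertices are joined by arcs. -/
def HasCycle (A : V → V → Prop) (k : ℕ) : Prop :=
  2 ≤ k ∧ ∃ f : ZMod k → V, Function.Injective f ∧ ∀ i, A (f i) (f (i + 1))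

/-- A digraph is strongly connected if every vertex is reachable from every other. -/
def StrongConn (A : V → V → Prop) : Prop := ∀ u v : V, Relation.ReflTransGen A u v

def outDeg [Fintype V] (A : V → V → Prop) [DecidableRel A] (u : V) : ℕ :=
  (Finset.univ.filter fun v => A u v).card

def inDeg [Fintype V] (A : V → V → Prop) [DecidableRel A] (u : V) : ℕ :=
  (Finset.univ.filter fun v => A v u).card

/-- total degree -/
def deg [Fintype V] (A : V → V → Prop) [DecidableRel A] (u : V) : ℕ :=
  outDeg A u + inDeg A u

/-- `D` is bipartite with partite sets `X`, `Y`: they partition the vertex set and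
every arc goes between the two sets. -/
def BipartiteWith [Fintype V] [DecidableEq V] (A : V → V → Prop) (X Y : Finset V) : Prop :=
  Disjoint X Y ∧ X ∪ Y = Finset.univ ∧
    ∀ u v, A u v → (u ∈ X ∧ v ∈ Y) ∨ (u ∈ Y ∧ v ∈ X)

/-- Bipartite digraph with explicitly indexed partite sets
`X = {x 0, …, x (a-1)}`, `Y = {y 0, …, y (a-1)}`. -/
def IndexedBipartite {a : ℕ} (A : V → V → Prop) (x y : Fin a → V) : Prop :=
  Function.Injective x ∧ Function.Injective y ∧ (∀ i j, x i ≠ y j) ∧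
  (∀ v : V, (∃ i, v = x i) ∨ (∃ i, v = y i)) ∧
  ∀ u v, A u v → (∃ i j, u = x i ∧ v = y j) ∨ (∃ i j, u = y i ∧ v = x j)

/-- The contracted digraph `D*[M]` of the matching `y i → x i`:
arc `v_l → v_j` (`l ≠ j`) iff `x l → y j` in `D`. -/
def Dstar {a : ℕ} (A : V → V → Prop) (x y : Fin a → V) : Fin a → Fin a → Prop :=
  fun l j => l ≠ j ∧ A (x l) (y j)

instance {a : ℕ} (A : V → V → Prop) [DecidableRel A] (x y : Fin a → V) :
    DecidableRel (Dstar A x y) := fun l j => by unfold Dstar; infer_instance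

/-- The size of a perfect matching `y i → x (π i)` from `Y` to `X`:
the number of matched pairs with no arc back from `X` to `Y`. -/
def matchSize {a : ℕ} (A : V → V → Prop) [DecidableRel A] (x y : Fin a → V)
    (π : Equiv.Perm (Fin a)) : ℕ :=
  (Finset.univ.filter fun i => ¬ A (x (π i)) (y i)).card

/-- `y i → x i` is a perfect matching from `Y` to `X` of maximum size among all
perfect matchings from `Y` to `X`. -/
def IsMaxMatching {a : ℕ} (A : V → V → Prop) [DecidableRel A] (x y : Fin a → V) : Prop :=
  (∀ i, A (y i) (x i)) ∧
  ∀ π : Equiv.Perm (Fin a), (∀ i, A (y i) (x (π i))) →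
    matchSize A x y π ≤ matchSize A x y 1

/-- `D` is a directed cycle: its arcs are exactly those of a cyclic ordering of all vertices. -/
def IsDirectedCycle [Fintype V] (A : V → V → Prop) : Prop :=
  ∃ e : V ≃ ZMod (Fintype.card V), ∀ u v, A u v ↔ e v = e u + 1

end Defs

/-!
Without a 2-cycle, the out- and in-neighbourhoods of a vertex `x ∈ X` are disjoint subsets of `Y`,
so `d(x) ≤ a`. Two distinct vertices of `X` then have degree sum at most `2a < 3a`.
-/

section

variable {V : Type*} [Fintype V] [DecidableEq V] {A : V → V → Prop} [DecidableRel A]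

lemma deg_le_card_of_forall_not_mutual {u : V} {S : Finset V}
    (hout : ∀ v, A u v → v ∈ S) (hin : ∀ v, A v u → v ∈ S)
    (hmutual : ∀ v ∈ S, A u v → ¬ A v u) : deg A u ≤ S.card := by
  have hdisj : Disjoint (univ.filter fun v => A u v) (univ.filter fun v => A v u) := by
    rw [disjoint_left]
    intro v hv hv'
    simp only [mem_filter, mem_univ, true_and] at hv hv'
    exact hmutual v (hout v hv) hv hv'
  calc deg A u = ((univ.filter fun v => A u v) ∪ (univ.filter fun v => A v u)).card :=
        (card_union_of_disjoint hdisj).symm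
    _ ≤ S.card := card_le_card <| union_subset
        (fun v hv => hout v (mem_filter.mp hv).2) (fun v hv => hin v (mem_filter.mp hv).2)

lemma BipartiteWith.deg_le_card_right {X Y : Finset V} (hbip : BipartiteWith A X Y)
    {u : V} (hu : u ∈ X) (hmutual : ∀ v, u ≠ v → A u v → ¬ A v u) : deg A u ≤ Y.card := by
  obtain ⟨hXY, -, harc⟩ := hbip
  have hu' : u ∉ Y := disjoint_left.mp hXY hu
  refine deg_le_card_of_forall_not_mutual (fun v huv => ?_) (fun v hvu => ?_)
    (fun v hv => hmutual v (ne_of_mem_of_not_mem hv hu').symm)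
  · rcases harc u v huv with ⟨-, hv⟩ | ⟨hu'', -⟩
    exacts [hv, absurd hu'' hu']
  · rcases harc v u hvu with ⟨-, hu''⟩ | ⟨hv, -⟩
    exacts [absurd hu'' hu', hv]

end

theorem stmt1_general {V : Type*} [Fintype V] [DecidableEq V] (A : V → V → Prop) [DecidableRel A]
    (a : ℕ) (ha : 3 ≤ a) (X Y : Finset V)
    (hX : X.card = a) (hY : Y.card = a)
    (hbip : BipartiteWith A X Y)
    (hdeg : ∀ u v : V, u ≠ v → ((u ∈ X ∧ v ∈ X) ∨ (u ∈ Y ∧ v ∈ Y)) →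
      3 * a ≤ deg A u + deg A v) :
    ∃ u v : V, u ≠ v ∧ A u v ∧ A v u := by
  by_contra! hnone
  obtain ⟨u, hu, v, hv, huv⟩ := one_lt_card.mp (show 1 < X.card by omega)
  have hdu := hbip.deg_le_card_right hu (hnone u)
  have hdv := hbip.deg_le_card_right hv (hnone v)
  have hsum := hdeg u v huv (Or.inl ⟨hu, hv⟩)
  omega

/-- existence of a cycle of length 2. -/
theorem stmt1 {V : Type*} [Fintype V] [DecidableEq V] (A : V → V → Prop) [DecidableRel A]
    (a : ℕ) (ha : 3 ≤ a) (X Y : Finset V)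
    (hcard : Fintype.card V = 2 * a) (hX : X.card = a) (hY : Y.card = a)
    (hbip : BipartiteWith A X Y) (hstrong : StrongConn A)
    (hdeg : ∀ u v : V, u ≠ v → ((u ∈ X ∧ v ∈ X) ∨ (u ∈ Y ∧ v ∈ Y)) →
      3 * a ≤ deg A u + deg A v) :
    ∃ u v : V, u ≠ v ∧ A u v ∧ A v u :=
  stmt1_general A a ha X Y hX hY hbip hdeg
end

section
/- Let D be a strongly connected balanced bipartite digraph of order 2a ≥ 6 with partite sets X and Y. If d(x) + d(y) ≥ 3a for every pair of distinct vertices x, y either both in X or both in Y, then D contains a directed cycle of length 4. -/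
open Finset

/-
Assume there is no 4-cycle. For `u, v ∈ X` let `S(u, v)` be the set of `z ∈ Y` with `u → z → v`.
Since all out-neighbours of `u` and in-neighbours of `v` lie in `Y`, `d⁺(u) + d⁻(v) ≤ a + |S(u, v)|`,
so the degree condition gives `|S(u, v)| + |S(v, u)| ≥ a ≥ 3` for `u ≠ v`. Distinct `z ∈ S(u, v)` and
`z' ∈ S(v, u)` would close the 4-cycle `u z v z'`, so one of the two sets is empty and the other is
all of `Y`. The relation `S(u, v) = Y` is therefore a tournament on `X`, and three vertices of `X`
carry a path `u ⇒ v ⇒ w`. By strong connectivity `w` has an out-neighbour `z ∈ Y`; then `z → v`, and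
any `y ∈ Y \ {z}` gives the 4-cycle `v y w z`.
-/

lemma hasCycle_four_of_arcs {V : Type*} {A : V → V → Prop} {Y : Finset V} {x₁ y₁ x₂ y₂ : V}
    (hx : x₁ ≠ x₂) (hy : y₁ ≠ y₂) (hx₁ : x₁ ∉ Y) (hx₂ : x₂ ∉ Y) (hy₁ : y₁ ∈ Y) (hy₂ : y₂ ∈ Y)
    (a₁ : A x₁ y₁) (a₂ : A y₁ x₂) (a₃ : A x₂ y₂) (a₄ : A y₂ x₁) :
    HasCycle A 4 := by
  refine ⟨by norm_num, ![x₁, y₁, x₂, y₂], ?_, ?_⟩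
  · have hne : ∀ {p q}, p ∈ Y → q ∉ Y → p ≠ q ∧ q ≠ p := fun hp hq =>
      ⟨ne_of_mem_of_not_mem hp hq, (ne_of_mem_of_not_mem hp hq).symm⟩
    change Function.Injective (![x₁, y₁, x₂, y₂] : Fin 4 → V)
    simp [Function.Injective, Fin.forall_fin_succ, hx.symm, hy.symm, *]
  · intro i
    fin_cases i <;> assumption

lemma Finset.exists_rel_rel_of_total {α : Type*} {s : Finset α} (hs : 3 ≤ #s)
    {R : α → α → Prop} (hR : ∀ p ∈ s, ∀ q ∈ s, p ≠ q → R p q ∨ R q p) :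
    ∃ u ∈ s, ∃ v ∈ s, ∃ w ∈ s, v ≠ w ∧ R u v ∧ R v w := by
  obtain ⟨x₁, x₂, x₃, h₁, h₂, h₃, h₁₂, h₁₃, h₂₃⟩ := two_lt_card_iff.mp hs
  rcases hR _ h₁ _ h₂ h₁₂ with r₁₂ | r₂₁ <;> rcases hR _ h₂ _ h₃ h₂₃ with r₂₃ | r₃₂
  · exact ⟨x₁, h₁, x₂, h₂, x₃, h₃, h₂₃, r₁₂, r₂₃⟩
  · rcases hR _ h₁ _ h₃ h₁₃ with r₁₃ | r₃₁
    · exact ⟨x₁, h₁, x₃, h₃, x₂, h₂, h₂₃.symm, r₁₃, r₃₂⟩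
    · exact ⟨x₃, h₃, x₁, h₁, x₂, h₂, h₁₂, r₃₁, r₁₂⟩
  · rcases hR _ h₁ _ h₃ h₁₃ with r₁₃ | r₃₁
    · exact ⟨x₂, h₂, x₁, h₁, x₃, h₃, h₁₃, r₂₁, r₁₃⟩
    · exact ⟨x₂, h₂, x₃, h₃, x₁, h₁, h₁₃.symm, r₂₃, r₃₁⟩
  · exact ⟨x₃, h₃, x₂, h₂, x₁, h₁, h₁₂.symm, r₃₂, r₂₁⟩

section TwoPaths

variable {V : Type*} {A : V → V → Prop} [DecidableRel A] {Y : Finset V} {u v : V}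

def twoPaths (A : V → V → Prop) [DecidableRel A] (Y : Finset V) (u v : V) : Finset V :=
  Y.filter fun z => A u z ∧ A z v

lemma eq_of_mem_twoPaths_of_not_hasCycle (hno : ¬ HasCycle A 4) (huY : u ∉ Y) (hvY : v ∉ Y)
    (huv : u ≠ v) : ∀ z ∈ twoPaths A Y u v, ∀ z' ∈ twoPaths A Y v u, z = z' := by
  intro z hz z' hz'
  simp only [twoPaths, mem_filter] at hz hz'
  by_contra hzz'
  exact hno <| hasCycle_four_of_arcs huv hzz' huY hvY hz.1 hz'.1 hz.2.1 hz.2.2 hz'.2.1 hz'.2.2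

end TwoPaths

section Bipartite

variable {V : Type*} [Fintype V] [DecidableEq V] {A : V → V → Prop} {X Y : Finset V} {u v : V}

lemma BipartiteWith.head_mem_right (h : BipartiteWith A X Y) (hu : u ∈ X) (huv : A u v) :
    v ∈ Y :=
  (h.2.2 u v huv).elim And.right fun h' => absurd h'.1 (disjoint_left.mp h.1 hu)

lemma BipartiteWith.tail_mem_right (h : BipartiteWith A X Y) (hv : v ∈ X) (huv : A u v) :
    u ∈ Y :=
  (h.2.2 u v huv).elim (fun h' => absurd h'.2 (disjoint_left.mp h.1 hv)) And.left

variable [DecidableRel A]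

lemma BipartiteWith.outDeg_eq (h : BipartiteWith A X Y) (hu : u ∈ X) :
    outDeg A u = #(Y.filter (A u ·)) := by
  unfold outDeg
  congr 1
  ext z
  simpa using fun huz => h.head_mem_right hu huz

lemma BipartiteWith.inDeg_eq (h : BipartiteWith A X Y) (hv : v ∈ X) :
    inDeg A v = #(Y.filter (A · v)) := by
  unfold inDeg
  congr 1
  ext z
  simpa using fun hzv => h.tail_mem_right hv hzv

lemma BipartiteWith.outDeg_add_inDeg_le (h : BipartiteWith A X Y) (hu : u ∈ X) (hv : v ∈ X) :
    outDeg A u + inDeg A v ≤ #Y + #(twoPaths A Y u v) := by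
  rw [h.outDeg_eq hu, h.inDeg_eq hv, twoPaths, filter_and, ← card_union_add_card_inter]
  gcongr
  exact union_subset (filter_subset _ _) (filter_subset _ _)

lemma BipartiteWith.twoPaths_eq_or_twoPaths_eq (h : BipartiteWith A X Y) (hno : ¬ HasCycle A 4)
    (hY : 3 ≤ #Y) (hu : u ∈ X) (hv : v ∈ X) (huv : u ≠ v)
    (hdeg : 3 * #Y ≤ deg A u + deg A v) :
    twoPaths A Y u v = Y ∨ twoPaths A Y v u = Y := by
  have hbound := h.outDeg_add_inDeg_le hu hv
  have hbound' := h.outDeg_add_inDeg_le hv hu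
  unfold deg at hdeg
  have hsum : #Y ≤ #(twoPaths A Y u v) + #(twoPaths A Y v u) := by omega
  have hsub : ∀ p q, twoPaths A Y p q ⊆ Y := fun _ _ => filter_subset _ _
  rcases (twoPaths A Y u v).eq_empty_or_nonempty with hS | ⟨z, hz⟩
  · rw [hS, card_empty, zero_add] at hsum
    exact .inr (eq_of_subset_of_card_le (hsub v u) hsum)
  rcases (twoPaths A Y v u).eq_empty_or_nonempty with hS' | ⟨z', hz'⟩
  · rw [hS', card_empty, add_zero] at hsum
    exact .inl (eq_of_subset_of_card_le (hsub u v) hsum)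
  have huY := disjoint_left.mp h.1 hu
  have hvY := disjoint_left.mp h.1 hv
  have hmid := eq_of_mem_twoPaths_of_not_hasCycle hno huY hvY huv
  have hS : #(twoPaths A Y u v) ≤ 1 :=
    card_le_one.mpr fun p hp q hq => (hmid p hp z' hz').trans (hmid q hq z' hz').symm
  have hS' : #(twoPaths A Y v u) ≤ 1 :=
    card_le_one.mpr fun p hp q hq => (hmid z hz p hp).symm.trans (hmid z hz q hq)
  omega

end Bipartite

theorem stmt2_general {V : Type*} [Fintype V] [DecidableEq V] (A : V → V → Prop) [DecidableRel A]
    (a : ℕ) (ha : 3 ≤ a) (X Y : Finset V)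
    (hX : X.card = a) (hY : Y.card = a)
    (hbip : BipartiteWith A X Y) (hstrong : StrongConn A)
    (hdeg : ∀ u v : V, u ≠ v → ((u ∈ X ∧ v ∈ X) ∨ (u ∈ Y ∧ v ∈ Y)) →
      3 * a ≤ deg A u + deg A v) :
    HasCycle A 4 := by
  by_contra hno
  subst hY
  obtain ⟨u, -, v, hv, w, hw, hvw, hSuv, hSvw⟩ :=
    exists_rel_rel_of_total (hX ▸ ha) (R := fun p q => twoPaths A Y p q = Y)
      fun p hp q hq hpq => hbip.twoPaths_eq_or_twoPaths_eq hno ha hp hq hpq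
        (hdeg p q hpq (.inl ⟨hp, hq⟩))
  obtain ⟨z, hwz, -⟩ := ((hstrong w v).cases_head).resolve_left hvw.symm
  have hz : z ∈ Y := hbip.head_mem_right hw hwz
  obtain ⟨y, hy, hyz⟩ := exists_mem_ne (by omega : 1 < #Y) z
  have hzv := ((filter_eq_self.mp hSuv) z hz).2
  obtain ⟨hvy, hyw⟩ := (filter_eq_self.mp hSvw) y hy
  exact hno <| hasCycle_four_of_arcs hvw hyz (disjoint_left.mp hbip.1 hv)
    (disjoint_left.mp hbip.1 hw) hy hz hvy hyw hwz hzv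

/-- existence of a directed cycle of length 4. -/
theorem stmt2 {V : Type*} [Fintype V] [DecidableEq V] (A : V → V → Prop) [DecidableRel A]
    (a : ℕ) (ha : 3 ≤ a) (X Y : Finset V)
    (hcard : Fintype.card V = 2 * a) (hX : X.card = a) (hY : Y.card = a)
    (hbip : BipartiteWith A X Y) (hstrong : StrongConn A)
    (hdeg : ∀ u v : V, u ≠ v → ((u ∈ X ∧ v ∈ X) ∨ (u ∈ Y ∧ v ∈ Y)) →
      3 * a ≤ deg A u + deg A v) :
    HasCycle A 4 :=
  stmt2_general A a ha X Y hX hY hbip hstrong hdeg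
end

section
/- Let D be a balanced bipartite digraph with partite sets X and Y, M = {y_i x_i : i=1,...,a} a perfect matching from Y to X of maximum size, and D*[M] the contracted digraph. Suppose v_i and v_j are non-adjacent in D*[M] (i.e., x_i y_j ∉ A(D) and x_j y_i ∉ A(D)). If x_i y_i ∈ A(D) or x_j y_j ∈ A(D), then at most one of the arcs y_i x_j and y_j x_i belongs to A(D). -/
open Finset

/-!
Swapping the partners of `y i` and `y j` gives a perfect matching from `Y` to `X` (this uses the
arcs `y i → x j`, `y j → x i`). Non-adjacency of `v i`, `v j` makes both swapped pairs count towards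
its size, all other pairs are unchanged, and the pair with `x i → y i` or `x j → y j` counts only for
the new matching, contradicting maximality.
-/

theorem matchSize_one_lt {V : Type*} {a : ℕ} {A : V → V → Prop} [DecidableRel A]
    {x y : Fin a → V} {π : Equiv.Perm (Fin a)}
    (hmono : ∀ k, ¬ A (x k) (y k) → ¬ A (x (π k)) (y k))
    {k : Fin a} (hk : A (x k) (y k)) (hπk : ¬ A (x (π k)) (y k)) :
    matchSize A x y 1 < matchSize A x y π := by
  have hsub : (Finset.univ.filter fun l => ¬ A (x l) (y l)) ⊆
      Finset.univ.filter fun l => ¬ A (x (π l)) (y l) :=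
    Finset.monotone_filter_right _ fun l _ => hmono l
  exact Finset.card_lt_card
    ((Finset.ssubset_iff_of_subset hsub).2 ⟨k, by simpa using hπk, by simpa using hk⟩)

theorem swap_isMatching {V : Type*} {a : ℕ} {A : V → V → Prop} {x y : Fin a → V}
    (hmatch : ∀ k, A (y k) (x k)) {i j : Fin a} (hij : A (y i) (x j)) (hji : A (y j) (x i)) :
    ∀ k, A (y k) (x (Equiv.swap i j k)) := by
  intro k
  rw [Equiv.swap_apply_def]
  split_ifs with hki hkj
  · exact hki ▸ hij
  · exact hkj ▸ hji
  · exact hmatch k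

theorem stmt8_general {V : Type*} (A : V → V → Prop) [DecidableRel A] (a : ℕ)
    (x y : Fin a → V) (hmax : IsMaxMatching A x y)
    (i j : Fin a)
    (h1 : ¬ A (x i) (y j)) (h2 : ¬ A (x j) (y i))
    (h3 : A (x i) (y i) ∨ A (x j) (y j)) :
    ¬ (A (y i) (x j) ∧ A (y j) (x i)) := by
  rintro ⟨hij, hji⟩
  refine (hmax.2 _ (swap_isMatching hmax.1 hij hji)).not_gt ?_
  have hmono : ∀ k, ¬ A (x k) (y k) → ¬ A (x (Equiv.swap i j k)) (y k) := by
    intro k hk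
    rw [Equiv.swap_apply_def]
    split_ifs with hki hkj
    · exact hki ▸ h2
    · exact hkj ▸ h1
    · exact hk
  rcases h3 with hi | hj
  · exact matchSize_one_lt hmono hi (by simpa using h2)
  · exact matchSize_one_lt hmono hj (by simpa using h1)

/-- Claim 1(i): for non-adjacent v_i, v_j in D*[M] with
x_i y_i ∈ A(D) or x_j y_j ∈ A(D), at most one of y_i x_j, y_j x_i is an arc. -/
theorem stmt8 {V : Type*} (A : V → V → Prop) [DecidableRel A] (a : ℕ)
    (x y : Fin a → V) (hbip : IndexedBipartite A x y) (hmax : IsMaxMatching A x y)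
    (i j : Fin a) (hij : i ≠ j)
    (h1 : ¬ A (x i) (y j)) (h2 : ¬ A (x j) (y i))
    (h3 : A (x i) (y i) ∨ A (x j) (y j)) :
    ¬ (A (y i) (x j) ∧ A (y j) (x i)) :=
  stmt8_general A a x y hmax i j h1 h2 h3
end

section
/- Let D be a strongly connected balanced bipartite digraph of order 2a ≥ 6 satisfying d(x)+d(y) ≥ 3a for every pair of distinct vertices from the same partite set, and let M = {y_i x_i} be a perfect matching from Y to X of maximum size with contracted digraph D*[M]. If v_i and v_j are non-adjacent vertices of D*[M] and x_i y_i ∉ A(D) or x_j y_j ∉ A(D), then d(v_i) + d(v_j) ≥ 2a − 1 in D*[M]. -/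
/-!
In a bipartite digraph the in-degree of `x k` and the out-degree of `y k` are at most `a`, so the
degree conditions on `{x i, x j}` and `{y i, y j}` leave at least `2a` arcs of the form `x k → y l`
or `x l → y k` with `k ∈ {i, j}`. These are exactly the arcs counted by `d(v_i) + d(v_j)` in
`D*[M]`, except that a loop arc `x k → y k` is counted twice there and not at all in `D*[M]`.
If such a loop is present, maximality of `M` forbids having both `y i → x j` and `y j → x i`, and
the missing arc raises the count to `2a + 2`.
-/

open Finset

theorem Finset.card_filter_eq_card_filter_comp {ι α : Type*} [Fintype ι] [Fintype α]
    {p : α → Prop} [DecidablePred p] {f : ι → α} (hf : Function.Injective f)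
    (hp : ∀ v, p v → v ∈ Set.range f) : #{v | p v} = #{i | p (f i)} := by
  rw [← card_map ⟨f, hf⟩]
  congr 1
  ext v
  simp only [mem_filter, mem_univ, true_and, mem_map, Function.Embedding.coeFn_mk]
  refine ⟨fun hv => ?_, fun ⟨i, hi, hiv⟩ => hiv ▸ hi⟩
  obtain ⟨i, rfl⟩ := hp v hv
  exact ⟨i, hv, rfl⟩

theorem Finset.card_filter_add_one_le_card_fin {a : ℕ} {p : Fin a → Prop} [DecidablePred p]
    {k : Fin a} (hk : ¬ p k) : #{l | p l} + 1 ≤ a := by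
  simpa using card_lt_card (filter_ssubset.2 ⟨k, mem_univ k, hk⟩)

theorem Finset.card_filter_ne_add_ite {a : ℕ} (p : Fin a → Prop) [DecidablePred p] (k : Fin a) :
    #{l | l ≠ k ∧ p l} + (if p k then 1 else 0) = #{l | p l} := by
  have herase : ({l | l ≠ k ∧ p l} : Finset (Fin a)) = ({l | p l} : Finset (Fin a)).erase k := by
    ext l
    simp [and_comm]
  rw [herase]
  split_ifs with hk
  · exact card_erase_add_one (by simpa using hk)
  · rw [erase_eq_of_notMem (by simpa using hk), add_zero]

section Bipartite

variable {V : Type*} [Fintype V] {A : V → V → Prop} [DecidableRel A] {a : ℕ} {x y : Fin a → V}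

theorem IndexedBipartite.deg_x (hbip : IndexedBipartite A x y) (k : Fin a) :
    deg A (x k) = #{l | A (x k) (y l)} + #{l | A (y l) (x k)} := by
  obtain ⟨hx, hy, hxy, -, harc⟩ := hbip
  unfold deg outDeg inDeg
  rw [card_filter_eq_card_filter_comp (p := (A (x k) ·)) hy,
    card_filter_eq_card_filter_comp (p := (A · (x k))) hy]
  · intro v hv
    rcases harc _ _ hv with ⟨_, j, -, hk⟩ | ⟨i, _, rfl, -⟩
    · exact absurd hk (hxy k j)
    · exact ⟨i, rfl⟩
  · intro v hv
    rcases harc _ _ hv with ⟨_, j, -, rfl⟩ | ⟨i, _, hk, -⟩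
    · exact ⟨j, rfl⟩
    · exact absurd hk (hxy k i)

theorem IndexedBipartite.deg_y (hbip : IndexedBipartite A x y) (k : Fin a) :
    deg A (y k) = #{l | A (y k) (x l)} + #{l | A (x l) (y k)} := by
  obtain ⟨hx, hy, hxy, -, harc⟩ := hbip
  unfold deg outDeg inDeg
  rw [card_filter_eq_card_filter_comp (p := (A (y k) ·)) hx,
    card_filter_eq_card_filter_comp (p := (A · (y k))) hx]
  · intro v hv
    rcases harc _ _ hv with ⟨i, _, rfl, -⟩ | ⟨_, j, -, hk⟩
    · exact ⟨i, rfl⟩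
    · exact absurd hk.symm (hxy j k)
  · intro v hv
    rcases harc _ _ hv with ⟨i, _, hk, -⟩ | ⟨_, j, -, rfl⟩
    · exact absurd hk.symm (hxy i k)
    · exact ⟨j, rfl⟩

end Bipartite

theorem deg_Dstar_add_ite {V : Type*} (A : V → V → Prop) [DecidableRel A] {a : ℕ}
    (x y : Fin a → V) (k : Fin a) :
    deg (Dstar A x y) k + (if A (x k) (y k) then 2 else 0)
      = #{l | A (x k) (y l)} + #{l | A (x l) (y k)} := by
  have hout : outDeg (Dstar A x y) k = #{l | l ≠ k ∧ A (x k) (y l)} := by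
    simp only [outDeg, Dstar, ne_comm]
  have hin : inDeg (Dstar A x y) k = #{l | l ≠ k ∧ A (x l) (y k)} := by
    simp only [inDeg, Dstar]
  have hout' := card_filter_ne_add_ite (fun l => A (x k) (y l)) k
  have hin' := card_filter_ne_add_ite (fun l => A (x l) (y k)) k
  unfold deg
  split_ifs at hout' hin' ⊢ <;> omega

/-- Exchanging the partners of `y i` and `y j` would give a larger matching. -/
theorem IsMaxMatching.not_arc_or_not_arc {V : Type*} {A : V → V → Prop} [DecidableRel A]
    {a : ℕ} {x y : Fin a → V} (hmax : IsMaxMatching A x y) {i j : Fin a}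
    (h1 : ¬ A (x i) (y j)) (h2 : ¬ A (x j) (y i)) (hloop : A (x i) (y i) ∨ A (x j) (y j)) :
    ¬ A (y i) (x j) ∨ ¬ A (y j) (x i) := by
  rw [← not_and_or]
  rintro ⟨hij, hji⟩
  refine (hmax.2 (Equiv.swap i j) fun k => ?_).not_gt ?_
  · rw [Equiv.swap_apply_def]
    split_ifs with hki hkj
    · exact hki ▸ hij
    · exact hkj ▸ hji
    · exact hmax.1 k
  · have hsub := monotone_filter_right univ
      (p := fun k => ¬ A (x ((1 : Equiv.Perm (Fin a)) k)) (y k))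
      (q := fun k => ¬ A (x (Equiv.swap i j k)) (y k)) fun k _ hk => by
        rw [Equiv.swap_apply_def]
        split_ifs with hki hkj
        · exact hki ▸ h2
        · exact hkj ▸ h1
        · exact hk
    refine card_lt_card ((ssubset_iff_of_subset hsub).2 ?_)
    rcases hloop with hi | hj
    · exact ⟨i, mem_filter.2 ⟨mem_univ i, by simpa using h2⟩, fun hmem => (mem_filter.1 hmem).2 hi⟩
    · exact ⟨j, mem_filter.2 ⟨mem_univ j, by simpa using h1⟩, fun hmem => (mem_filter.1 hmem).2 hj⟩

theorem stmt9_general {V : Type*} [Fintype V] (A : V → V → Prop) [DecidableRel A]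
    (a : ℕ) (x y : Fin a → V) (hbip : IndexedBipartite A x y)
    (hdegx : ∀ i j : Fin a, i ≠ j → 3 * a ≤ deg A (x i) + deg A (x j))
    (hdegy : ∀ i j : Fin a, i ≠ j → 3 * a ≤ deg A (y i) + deg A (y j))
    (hmax : IsMaxMatching A x y)
    (i j : Fin a) (hij : i ≠ j)
    (h1 : ¬ A (x i) (y j)) (h2 : ¬ A (x j) (y i))
    (h3 : ¬ A (x i) (y i) ∨ ¬ A (x j) (y j)) :
    2 * a - 1 ≤ deg (Dstar A x y) i + deg (Dstar A x y) j := by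
  have hdx := hdegx i j hij
  have hdy := hdegy i j hij
  rw [hbip.deg_x, hbip.deg_x] at hdx
  rw [hbip.deg_y, hbip.deg_y] at hdy
  have hi := deg_Dstar_add_ite A x y i
  have hj := deg_Dstar_add_ite A x y j
  have hle (p : Fin a → Prop) [DecidablePred p] : #{l | p l} ≤ a :=
    (card_filter_le _ _).trans_eq (card_fin a)
  have := hle fun l => A (y l) (x i)
  have := hle fun l => A (y l) (x j)
  have := hle fun l => A (y i) (x l)
  have := hle fun l => A (y j) (x l)
  by_cases hloop : A (x i) (y i) ∨ A (x j) (y j)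
  · have hloops : (if A (x i) (y i) then 2 else 0) + (if A (x j) (y j) then 2 else 0) ≤ 2 := by
      rcases h3 with h | h <;> simp only [h, if_false] <;> split_ifs <;> omega
    rcases hmax.not_arc_or_not_arc h1 h2 hloop with h | h
    · have := card_filter_add_one_le_card_fin (p := fun l => A (y l) (x j)) h
      have := card_filter_add_one_le_card_fin (p := fun l => A (y i) (x l)) h
      omega
    · have := card_filter_add_one_le_card_fin (p := fun l => A (y l) (x i)) h
      have := card_filter_add_one_le_card_fin (p := fun l => A (y j) (x l)) h
      omega
  · rw [not_or] at hloop
    simp only [hloop.1, hloop.2, if_false] at hi hj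
    omega

/-- Claim 1(ii): non-adjacent v_i, v_j in D*[M] with x_i y_i ∉ A(D)
or x_j y_j ∉ A(D) have degree sum at least 2a − 1 in D*[M]. -/
theorem stmt9 {V : Type*} [Fintype V] (A : V → V → Prop) [DecidableRel A]
    (a : ℕ) (ha : 3 ≤ a) (x y : Fin a → V) (hbip : IndexedBipartite A x y)
    (hstrong : StrongConn A)
    (hdegx : ∀ i j : Fin a, i ≠ j → 3 * a ≤ deg A (x i) + deg A (x j))
    (hdegy : ∀ i j : Fin a, i ≠ j → 3 * a ≤ deg A (y i) + deg A (y j))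
    (hmax : IsMaxMatching A x y)
    (i j : Fin a) (hij : i ≠ j)
    (h1 : ¬ A (x i) (y j)) (h2 : ¬ A (x j) (y i))
    (h3 : ¬ A (x i) (y i) ∨ ¬ A (x j) (y j)) :
    2 * a - 1 ≤ deg (Dstar A x y) i + deg (Dstar A x y) j :=
  stmt9_general A a x y hbip hdegx hdegy hmax i j hij h1 h2 h3
end

section
/- For every integer a ≥ 2 there exists a balanced bipartite digraph D of order 2a with partite sets X and Y such that d(x)+d(y) ≥ 3a for every pair of distinct vertices x, y either both in X or both in Y, but D is not strongly connected. -/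
open Finset

/-!
Let `X = {0, …, a - 1}` and `Y = {a, …, 2a - 1}`, with all arcs from `X` to `Y` and all arcs
from `Y` to `X ∖ {0}`. Then `0` is a source, so no other vertex reaches it. Its degree `a` is the
only small one: the other vertices of `X` have degree `2a` and those of `Y` have degree
`2a - 1 ≥ 3a/2` once `a ≥ 2`, so any two vertices on one side have degree sum at least `3a`.
-/

theorem not_strongConn_of_forall_not_adj {V : Type*} {A : V → V → Prop}
    {s t : V} (hts : t ≠ s) (hs : ∀ u, ¬ A u s) : ¬ StrongConn A := fun hA =>
  match (hA t s).cases_tail with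
  | .inl hst => hts hst.symm
  | .inr ⟨u, _, hus⟩ => hs u hus

theorem Fin.card_filter_of_iff_Ico {n l r : ℕ} {p : Fin n → Prop} [DecidablePred p]
    (hr : r ≤ n) (hp : ∀ v : Fin n, p v ↔ l ≤ (v : ℕ) ∧ (v : ℕ) < r) : #{v | p v} = r - l := by
  rw [← Nat.card_Ico, ← card_map Fin.valEmbedding]
  congr 1
  ext k
  simp only [mem_map, mem_filter, mem_univ, true_and, Fin.valEmbedding_apply, mem_Ico, hp]
  exact ⟨fun ⟨v, hv, hvk⟩ => hvk ▸ hv, fun hk => ⟨⟨k, by omega⟩, hk, rfl⟩⟩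

def sourceDigraph (a : ℕ) (u v : Fin (2 * a)) : Bool :=
  decide (((u : ℕ) < a ∧ a ≤ (v : ℕ)) ∨ (a ≤ (u : ℕ) ∧ 0 < (v : ℕ) ∧ (v : ℕ) < a))

namespace sourceDigraph

variable {a : ℕ}

theorem outDeg_eq (u : Fin (2 * a)) :
    outDeg (fun u v => sourceDigraph a u v = true) u = if (u : ℕ) < a then a else a - 1 := by
  unfold outDeg
  split_ifs with hu
  · refine (Fin.card_filter_of_iff_Ico (l := a) le_rfl fun v => ?_).trans (by omega)
    simp only [sourceDigraph, decide_eq_true_eq]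
    omega
  · refine Fin.card_filter_of_iff_Ico (l := 1) (by omega) fun v => ?_
    simp only [sourceDigraph, decide_eq_true_eq]
    omega

theorem inDeg_eq (u : Fin (2 * a)) :
    inDeg (fun u v => sourceDigraph a u v = true) u = if (u : ℕ) = 0 then 0 else a := by
  unfold inDeg
  split_ifs with hu
  · refine Fin.card_filter_of_iff_Ico (l := 0) (r := 0) (Nat.zero_le _) fun v => ?_
    simp only [sourceDigraph, decide_eq_true_eq]
    omega
  · rcases Nat.lt_or_ge (u : ℕ) a with hua | hua
    · refine (Fin.card_filter_of_iff_Ico (l := a) le_rfl fun v => ?_).trans (by omega)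
      simp only [sourceDigraph, decide_eq_true_eq]
      omega
    · refine Fin.card_filter_of_iff_Ico (l := 0) (by omega) fun v => ?_
      simp only [sourceDigraph, decide_eq_true_eq]
      omega

theorem bipartiteWith :
    BipartiteWith (fun u v => sourceDigraph a u v = true) {v | (v : ℕ) < a} {v | a ≤ (v : ℕ)} := by
  refine ⟨disjoint_filter.2 fun v _ hv => Nat.not_le.2 hv, ?_, fun u v huv => ?_⟩
  · ext v
    simp only [mem_union, mem_filter, mem_univ, true_and, iff_true]
    omega
  · simp only [sourceDigraph, decide_eq_true_eq] at huv
    simp only [mem_filter, mem_univ, true_and]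
    omega

theorem three_mul_le_deg_add_deg (ha : 2 ≤ a) {u v : Fin (2 * a)} (huv : u ≠ v)
    (hside : ((u : ℕ) < a ∧ (v : ℕ) < a) ∨ (a ≤ (u : ℕ) ∧ a ≤ (v : ℕ))) :
    3 * a ≤ deg (fun u v => sourceDigraph a u v = true) u +
      deg (fun u v => sourceDigraph a u v = true) v := by
  have huv' : (u : ℕ) ≠ v := Fin.val_injective.ne huv
  simp only [deg, outDeg_eq, inDeg_eq]
  split_ifs <;> omega

theorem not_strongConn (ha : 0 < a) : ¬ StrongConn (fun u v => sourceDigraph a u v = true) :=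
  not_strongConn_of_forall_not_adj (s := ⟨0, by omega⟩) (t := ⟨a, by omega⟩)
    (Fin.ne_of_val_ne ha.ne') fun u => by simp [sourceDigraph, ha.ne']

end sourceDigraph

/-- sharpness of strong connectivity — for every a ≥ 2 there is a
non-strongly-connected balanced bipartite digraph satisfying the degree condition. -/
theorem stmt11 (a : ℕ) (ha : 2 ≤ a) :
    ∃ A : Fin (2 * a) → Fin (2 * a) → Bool, ∃ X Y : Finset (Fin (2 * a)),
      BipartiteWith (fun u v => A u v = true) X Y ∧ X.card = a ∧ Y.card = a ∧
      (∀ u v : Fin (2 * a), u ≠ v → ((u ∈ X ∧ v ∈ X) ∨ (u ∈ Y ∧ v ∈ Y)) →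
        3 * a ≤ deg (fun u v => A u v = true) u + deg (fun u v => A u v = true) v) ∧
      ¬ StrongConn (fun u v => A u v = true) := by
  refine ⟨sourceDigraph a, _, _, sourceDigraph.bipartiteWith,
    ?_, ?_, fun u v huv hside => ?_, sourceDigraph.not_strongConn (by omega)⟩
  · rw [Fin.card_filter_val_lt]
    omega
  · exact (Fin.card_filter_of_iff_Ico (l := a) le_rfl fun v => by omega).trans (by omega)
  · simp only [mem_filter, mem_univ, true_and] at hside
    exact sourceDigraph.three_mul_le_deg_add_deg ha huv hside
end

section
/- Let D(8) be the bipartite digraph with partite sets X = {x_0,x_1,x_2,x_3}, Y = {y_0,y_1,y_2,y_3}, whose arcs are exactly: y_0 x_1, y_1 x_0, x_2 y_3, x_3 y_2, together with both arcs of the 2-cycles x_i ↔ y_i for i = 0,1,2,3 and y_0 ↔ x_2, y_0 ↔ x_3, y_1 ↔ x_2, y_1 ↔ x_3. Then D(8) is strongly connected but contains no Hamiltonian cycle. -/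
open Finset

/-- The digraph D(8): vertices 0,1,2,3 are x_0,…,x_3 and 4,5,6,7 are y_0,…,y_3. -/
def D8 : Fin 8 → Fin 8 → Prop := fun u v =>
  (u, v) ∈ ([(4,1),(5,0),(2,7),(3,6),
             (0,4),(4,0),(1,5),(5,1),(2,6),(6,2),(3,7),(7,3),
             (4,2),(2,4),(4,3),(3,4),(5,2),(2,5),(5,3),(3,5)] : List (Fin 8 × Fin 8))

instance : DecidableRel D8 := fun u v => by unfold D8; infer_instance

/-!
Strong connectivity is witnessed by the closed walk
`x₀ y₀ x₁ y₁ x₂ y₃ x₃ y₂ x₂ y₁ x₀` through all eight vertices.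

For non-Hamiltonicity, take `S = {x₀, x₁}` and `T = {y₀, y₁}`: every arc leaving `S` enters `T`
and every arc entering `S` leaves `T`. On a Hamiltonian cycle the predecessors of the two
vertices of `S` are two distinct vertices of `T`, hence all of `T`, so the successor of every
vertex of `T` lies in `S`. Thus `S ∪ T` is closed under taking successors on the cycle and
must contain every vertex, which is false since `|S ∪ T| = 4 < 8`.
-/

theorem ZMod.induction_add_one {k : ℕ} [NeZero k] {P : ZMod k → Prop} {a : ZMod k} (ha : P a)
    (hstep : ∀ i, P i → P (i + 1)) (j : ZMod k) : P j := by
  have hreach : ∀ n : ℕ, P (a + n) := by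
    intro n
    induction n with
    | zero => simpa using ha
    | succ n ih => simpa [Nat.cast_succ, add_assoc] using hstep _ ih
  simpa [ZMod.natCast_zmod_val] using hreach (j - a).val

section Digraph

variable {V : Type*} {A : V → V → Prop}

theorem strongConn_of_closed_walk {m : ℕ} [NeZero m] (g : ZMod m → V)
    (hg : Function.Surjective g) (harc : ∀ i, A (g i) (g (i + 1))) : StrongConn A := by
  intro u v
  obtain ⟨i, rfl⟩ := hg u
  obtain ⟨j, rfl⟩ := hg v
  exact ZMod.induction_add_one (P := fun j => Relation.ReflTransGen A (g i) (g j)) .refl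
    (fun j hj => hj.tail (harc j)) j

theorem HasCycle.union_eq_univ [Fintype V] [DecidableEq V]
    (hA : HasCycle A (Fintype.card V)) {S T : Finset V} (hS : S.Nonempty) (hcard : #T ≤ #S)
    (hout : ∀ u ∈ S, ∀ v, A u v → v ∈ T) (hin : ∀ u, ∀ v ∈ S, A u v → u ∈ T) :
    S ∪ T = univ := by
  obtain ⟨hk, f, hinj, harc⟩ := hA
  have : NeZero (Fintype.card V) := ⟨by omega⟩
  have hbij : Function.Bijective f :=
    (Fintype.bijective_iff_injective_and_card f).mpr ⟨hinj, ZMod.card _⟩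
  let e := Equiv.ofBijective f hbij
  have hfe : ∀ v, f (e.symm v) = v := e.apply_symm_apply
  let pred : V → V := fun v => f (e.symm v - 1)
  have hpred_arc : ∀ v, A (pred v) v := fun v => by
    simpa [pred, sub_add_cancel, hfe] using harc (e.symm v - 1)
  have hpred_inj : Set.InjOn pred S := fun u _ v _ huv =>
    e.symm.injective (sub_left_injective (hinj huv))
  have hpred_surj : Set.SurjOn pred S T :=
    Finset.surjOn_of_injOn_of_card_le pred (fun v hv => hin _ v hv (hpred_arc v)) hpred_inj hcard
  have hclosed : ∀ i, f i ∈ S ∪ T → f (i + 1) ∈ S ∪ T := by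
    intro i hi
    rcases Finset.mem_union.mp hi with hiS | hiT
    · exact Finset.mem_union_right _ (hout _ hiS _ (harc i))
    · obtain ⟨s, hs, hps⟩ := hpred_surj hiT
      rw [← hinj hps, sub_add_cancel, hfe]
      exact Finset.mem_union_left T hs
  obtain ⟨s, hs⟩ := hS
  have hall : ∀ i, f i ∈ S ∪ T :=
    ZMod.induction_add_one (a := e.symm s) (by rw [hfe]; exact Finset.mem_union_left T hs) hclosed
  exact Finset.eq_univ_of_forall fun v => hfe v ▸ hall (e.symm v)

end Digraph

def D8.closedWalk : ZMod 10 → Fin 8 := ![0, 4, 1, 5, 2, 7, 3, 6, 2, 5]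

/-- D(8) is strongly connected but not Hamiltonian. -/
theorem stmt12 : StrongConn D8 ∧ ¬ HasCycle D8 8 := by
  refine ⟨strongConn_of_closed_walk D8.closedWalk (by decide) (by decide), fun hcycle => ?_⟩
  have hcover : ({0, 1} ∪ {4, 5} : Finset (Fin 8)) = univ :=
    HasCycle.union_eq_univ (by simpa using hcycle) (by decide) (by decide) (by decide) (by decide)
  exact absurd hcover (by decide)
end

section
/- In the digraph D(8), max{d(x), d(y)} ≥ 7 for every pair of distinct vertices x, y that have a common out-neighbor, yet D(8) is not Hamiltonian. -/
open Finset

/-! A Hamiltonian cycle of `D(8)` would have to leave `x₀` and `x₁` towards their only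
out-neighbours `y₀`, `y₁`, and enter them from their only in-neighbours, again `y₀`, `y₁`.
So its successor permutation maps `{y₀, y₁}` onto `{x₀, x₁}` and back, closing up after
four vertices. -/

section HamiltonianCycle

variable {V : Type*} {A : V → V → Prop}

theorem HasCycle.exists_perm_succ [Fintype V] (h : HasCycle A (Fintype.card V)) :
    ∃ σ : Equiv.Perm V, (∀ v, A v (σ v)) ∧ ∀ u v, ∃ k : ℕ, (σ ^ k) u = v := by
  obtain ⟨hn, f, hf, harc⟩ := h
  have : NeZero (Fintype.card V) := ⟨by omega⟩
  let e : ZMod (Fintype.card V) ≃ V :=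
    Equiv.ofBijective f ((Fintype.bijective_iff_injective_and_card f).2 ⟨hf, ZMod.card _⟩)
  have hfe : ∀ v, f (e.symm v) = v := e.apply_symm_apply
  let σ : Equiv.Perm V := e.symm.trans ((Equiv.addRight 1).trans e)
  have hpow : ∀ (k : ℕ) v, (σ ^ k) v = f (e.symm v + k) := by
    intro k v
    induction k with
    | zero => simp [hfe]
    | succ k ih =>
      rw [pow_succ', Equiv.Perm.mul_apply, ih]
      simp [σ, e, add_assoc]
  refine ⟨σ, fun v => ?_, fun u v => ⟨(e.symm v - e.symm u).val, ?_⟩⟩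
  · simpa [σ, e, hfe] using harc (e.symm v)
  · rw [hpow, ZMod.natCast_zmod_val, add_sub_cancel]
    exact hfe v

theorem Equiv.Perm.eq_univ_of_mapsTo_of_forall_exists_pow_eq [Fintype V] {σ : Equiv.Perm V}
    (htrans : ∀ u v, ∃ k : ℕ, (σ ^ k) u = v) {W : Finset V} (hW : W.Nonempty)
    (hmaps : ∀ v ∈ W, σ v ∈ W) : W = univ := by
  obtain ⟨w, hw⟩ := hW
  refine eq_univ_of_forall fun v => ?_
  obtain ⟨k, rfl⟩ := htrans w v
  induction k with
  | zero => exact hw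
  | succ k ih => rw [pow_succ', Equiv.Perm.mul_apply]; exact hmaps _ ih

/-- Counting: `σ⁻¹` maps `T` injectively into `U`, which is no larger, hence onto `U`. -/
theorem Equiv.Perm.mem_of_in_neighbours_subset {σ : Equiv.Perm V} (hσ : ∀ v, A v (σ v))
    {T U : Finset V} (hcard : U.card ≤ T.card) (hin : ∀ t ∈ T, ∀ v, A v t → v ∈ U) :
    ∀ u ∈ U, σ u ∈ T := by
  have hsub : T.map σ.symm.toEmbedding ⊆ U := by
    intro u hu
    obtain ⟨t, ht, rfl⟩ := mem_map.1 hu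
    exact hin t ht _ (by simpa using hσ (σ.symm t))
  have hU : T.map σ.symm.toEmbedding = U := eq_of_subset_of_card_le hsub (by simpa using hcard)
  intro u hu
  rw [← hU] at hu
  obtain ⟨t, ht, rfl⟩ := mem_map.1 hu
  simpa using ht

theorem not_hasCycle_card_of_neighbours_subset [Fintype V] [DecidableEq V] {T U : Finset V}
    (hT : T.Nonempty) (hcard : U.card ≤ T.card) (hout : ∀ t ∈ T, ∀ v, A t v → v ∈ U)
    (hin : ∀ t ∈ T, ∀ v, A v t → v ∈ U) (hTU : T ∪ U ≠ univ) :
    ¬ HasCycle A (Fintype.card V) := by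
  intro h
  obtain ⟨σ, hσ, htrans⟩ := h.exists_perm_succ
  refine hTU (σ.eq_univ_of_mapsTo_of_forall_exists_pow_eq htrans (hT.mono subset_union_left) ?_)
  intro v hv
  rcases mem_union.1 hv with hvT | hvU
  · exact mem_union_right _ (hout v hvT _ (hσ v))
  · exact mem_union_left _ (σ.mem_of_in_neighbours_subset hσ hcard hin v hvU)

end HamiltonianCycle

/-- in D(8), every pair of distinct vertices with a common
out-neighbor has max degree ≥ 7, yet D(8) is not Hamiltonian. -/
theorem stmt13 :
    (∀ u v : Fin 8, u ≠ v → (∃ z, D8 u z ∧ D8 v z) →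
      7 ≤ max (deg D8 u) (deg D8 v)) ∧ ¬ HasCycle D8 8 :=
  -- The vertices of degree below 7 are `x₀, x₁, y₂, y₃`, whose only out-neighbours
  -- `y₀, y₁, x₂, x₃` are pairwise distinct.
  ⟨by decide, not_hasCycle_card_of_neighbours_subset (T := {0, 1}) (U := {4, 5})
    (by decide) (by decide) (by decide) (by decide) (by decide)⟩
end

section
/- Let D be a balanced bipartite digraph of order 2a ≥ 6 with partite sets X = {x_1,...,x_a}, Y = {y_1,...,y_a}, satisfying d(x)+d(y) ≥ 3a for all distinct vertices of the same partite set, and let M = {y_i x_i} be a perfect matching from Y to X. If for every pair i ≠ j at most one of the arcs x_i y_j, x_j y_i belongs to A(D), and x_i y_i ∉ A(D) for at least two distinct indices i, then a contradiction follows; that is, at most one index i satisfies both x_i y_i ∉ A(D) and the pairwise condition. -/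
/-!
If `x_i y_i` is not an arc and at most one of `x_i y_k`, `x_k y_i` is an arc for every `k ≠ i`,
then the out-neighbours of `x_i` and the in-neighbours of `y_i` index disjoint subsets of
`{1, …, a} \ {i}`, so `d⁺(x_i) + d⁻(y_i) ≤ a - 1`. With `d⁻(x_i) ≤ a` and `d⁺(y_i) ≤ a` this gives
`d(x_i) + d(y_i) ≤ 3a - 1`. Two such indices `i ≠ j` would give
`d(x_i) + d(x_j) + d(y_i) + d(y_j) ≤ 6a - 2`, while the degree condition on the pairs
`{x_i, x_j}` and `{y_i, y_j}` forces this sum to be at least `6a`.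
-/

open Finset

theorem card_filter_add_card_filter_lt {ι : Type*} [Fintype ι] [DecidableEq ι]
    (R : ι → ι → Prop) [DecidableRel R] {i : ι} (h : ∀ k, ¬ (R i k ∧ R k i)) :
    #{k | R i k} + #{k | R k i} < Fintype.card ι := by
  set s : Finset ι := {k | R i k}
  set t : Finset ι := {k | R k i}
  have hdisj : Disjoint s t := disjoint_filter.2 fun k _ hik hki => h k ⟨hik, hki⟩
  have hsub : s ∪ t ⊆ univ.erase i := by
    intro k hk
    refine mem_erase.2 ⟨?_, mem_univ k⟩
    rintro rfl
    exact h k (by simpa [s, t] using hk)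
  calc #s + #t = #(s ∪ t) := (card_union_of_disjoint hdisj).symm
    _ ≤ #(univ.erase i) := card_le_card hsub
    _ < Fintype.card ι := card_erase_lt_of_mem (mem_univ i)

section Degrees

variable {V : Type*} [Fintype V] {A : V → V → Prop} [DecidableRel A]
  {ι : Type*} [Fintype ι] {f : ι → V}

theorem outDeg_eq_card_filter_of_forall_mem_range (hf : Function.Injective f) {u : V}
    (h : ∀ v, A u v → ∃ k, v = f k) : outDeg A u = #{k | A u (f k)} := by
  classical
  rw [outDeg, ← card_image_of_injective _ hf]
  congr 1
  ext v
  simp only [mem_filter, mem_univ, true_and, mem_image]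
  constructor
  · intro hv
    obtain ⟨k, rfl⟩ := h v hv
    exact ⟨k, hv, rfl⟩
  · rintro ⟨k, hk, rfl⟩
    exact hk

theorem inDeg_eq_card_filter_of_forall_mem_range (hf : Function.Injective f) {u : V}
    (h : ∀ v, A v u → ∃ k, v = f k) : inDeg A u = #{k | A (f k) u} :=
  outDeg_eq_card_filter_of_forall_mem_range (A := fun v w => A w v) hf h

end Degrees

namespace IndexedBipartite

variable {V : Type*} {A : V → V → Prop} {a : ℕ} {x y : Fin a → V}

theorem exists_eq_y_of_adj_x (hbip : IndexedBipartite A x y) {i : Fin a} {v : V}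
    (h : A (x i) v ∨ A v (x i)) : ∃ k, v = y k := by
  obtain ⟨-, -, hxy, -, harc⟩ := hbip
  rcases h with h | h <;> rcases harc _ _ h with ⟨k, l, hk, hl⟩ | ⟨k, l, hk, hl⟩
  · exact ⟨l, hl⟩
  · exact absurd hk (hxy i k)
  · exact absurd hl (hxy i l)
  · exact ⟨k, hk⟩

theorem exists_eq_x_of_adj_y (hbip : IndexedBipartite A x y) {i : Fin a} {v : V}
    (h : A (y i) v ∨ A v (y i)) : ∃ k, v = x k := by
  obtain ⟨-, -, hxy, -, harc⟩ := hbip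
  rcases h with h | h <;> rcases harc _ _ h with ⟨k, l, hk, hl⟩ | ⟨k, l, hk, hl⟩
  · exact absurd hk.symm (hxy k i)
  · exact ⟨l, hl⟩
  · exact ⟨k, hk⟩
  · exact absurd hl.symm (hxy l i)

variable [Fintype V] [DecidableRel A]

theorem deg_x_add_deg_y_lt (hbip : IndexedBipartite A x y) {i : Fin a}
    (h : ∀ k, ¬ (A (x i) (y k) ∧ A (x k) (y i))) :
    deg A (x i) + deg A (y i) < 3 * a := by
  have hout_x := outDeg_eq_card_filter_of_forall_mem_range (u := x i) hbip.2.1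
    fun _ hv => hbip.exists_eq_y_of_adj_x (Or.inl hv)
  have hin_x := inDeg_eq_card_filter_of_forall_mem_range (u := x i) hbip.2.1
    fun _ hv => hbip.exists_eq_y_of_adj_x (Or.inr hv)
  have hout_y := outDeg_eq_card_filter_of_forall_mem_range (u := y i) hbip.1
    fun _ hv => hbip.exists_eq_x_of_adj_y (Or.inl hv)
  have hin_y := inDeg_eq_card_filter_of_forall_mem_range (u := y i) hbip.1
    fun _ hv => hbip.exists_eq_x_of_adj_y (Or.inr hv)
  have hsplit := card_filter_add_card_filter_lt (fun k l => A (x k) (y l)) h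
  have hin_x_le : #{k | A (y k) (x i)} ≤ a := (card_filter_le _ _).trans_eq (card_fin a)
  have hout_y_le : #{k | A (y i) (x k)} ≤ a := (card_filter_le _ _).trans_eq (card_fin a)
  simp only [Fintype.card_fin] at hsplit
  simp only [deg]
  omega

end IndexedBipartite

theorem stmt14_general {V : Type*} [Fintype V] (A : V → V → Prop) [DecidableRel A]
    (a : ℕ) (x y : Fin a → V) (hbip : IndexedBipartite A x y)
    (hdegx : ∀ i j : Fin a, i ≠ j → 3 * a ≤ deg A (x i) + deg A (x j))
    (hdegy : ∀ i j : Fin a, i ≠ j → 3 * a ≤ deg A (y i) + deg A (y j))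
    (hpair : ∀ i j : Fin a, i ≠ j → ¬ (A (x i) (y j) ∧ A (x j) (y i))) :
    ¬ ∃ i j : Fin a, i ≠ j ∧ ¬ A (x i) (y i) ∧ ¬ A (x j) (y j) := by
  have hdeficient : ∀ i, ¬ A (x i) (y i) → deg A (x i) + deg A (y i) < 3 * a := by
    intro i hi
    refine hbip.deg_x_add_deg_y_lt fun k => ?_
    rcases eq_or_ne k i with rfl | hk
    · exact fun h => hi h.1
    · exact hpair i k hk.symm
  rintro ⟨i, j, hij, hi, hj⟩
  have := hdeficient i hi
  have := hdeficient j hj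
  have := hdegx i j hij
  have := hdegy i j hij
  omega

/-- under the degree condition, if at most one of x_i y_j, x_j y_i
is an arc for every i ≠ j, then at most one index i has x_i y_i ∉ A(D). -/
theorem stmt14 {V : Type*} [Fintype V] (A : V → V → Prop) [DecidableRel A]
    (a : ℕ) (ha : 3 ≤ a) (x y : Fin a → V) (hbip : IndexedBipartite A x y)
    (hdegx : ∀ i j : Fin a, i ≠ j → 3 * a ≤ deg A (x i) + deg A (x j))
    (hdegy : ∀ i j : Fin a, i ≠ j → 3 * a ≤ deg A (y i) + deg A (y j))
    (hM : ∀ i, A (y i) (x i))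
    (hpair : ∀ i j : Fin a, i ≠ j → ¬ (A (x i) (y j) ∧ A (x j) (y i))) :
    ¬ ∃ i j : Fin a, i ≠ j ∧ ¬ A (x i) (y i) ∧ ¬ A (x j) (y j) :=
  stmt14_general A a x y hbip hdegx hdegy hpair
end

section
/- Let D be a strongly connected balanced bipartite digraph of order 2a ≥ 6 with partite sets X and Y, satisfying d(x)+d(y) ≥ 3a for every pair of distinct vertices from the same partite set. Then D is Hamiltonian. -/
open Finset

/-!
Two perfect matchings, `x i → y (φ i)` and `y m → x (ψ m)` (Hall's theorem, fed by the degree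
condition and strong connectivity), form a cycle factor; take one maximising the sum of the squares
of its cycle lengths. If `i` and `j` lie on different cycles of `ψ * φ`, the arcs
`x i → y (φ j)` and `x j → y (φ i)` cannot both be present, since switching to them merges the two
cycles; likewise on the `Y` side. Counting arcs with this, a union of cycles through `s ≥ 2`
vertices of `X` satisfies `a ≤ 2 s`, and equality forces it to span a complete bipartite
digraph. So a non-Hamiltonian maximal factor either splits into two complete halves, which
maximality, strong connectivity and the degree condition rule out, or contains a 2-cycle. Two
2-cycles violate the degree condition, and a finer count around a 2-cycle shows that the arcs
between it and the rest all point the same way, contradicting strong connectivity.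
-/

open Finset Equiv Equiv.Perm

namespace Equiv.Perm

variable {α : Type*}

theorem sameCycle_mul_swap_self [Finite α] [DecidableEq α] {π : Perm α} {i j : α}
    (hij : ¬ π.SameCycle i j) : (π * swap i j).SameCycle i j := by
  by_contra hij'
  -- the `π`-orbit of `π j` stays in the new cycle of `i` until it returns to `j`
  have key : ∀ k : ℕ, (π * swap i j).SameCycle i ((π ^ (k + 1)) j) := by
    intro k
    induction k with
    | zero => exact ⟨1, by simp [mul_apply]⟩
    | succ k ih =>
      have hi : (π ^ (k + 1)) j ≠ i := fun h =>
        hij (SameCycle.symm ⟨(k + 1 : ℕ), by rw [zpow_natCast]; exact h⟩)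
      have hj : (π ^ (k + 1)) j ≠ j := fun h => hij' (by rwa [h] at ih)
      rw [pow_succ', mul_apply, ← swap_apply_of_ne_of_ne hi hj, ← mul_apply]
      exact sameCycle_apply_right.2 ih
  have := key (orderOf π - 1)
  rw [Nat.sub_add_cancel (orderOf_pos π), pow_orderOf_eq_one] at this
  exact hij' this

theorem SameCycle.mul_swap [Finite α] [DecidableEq α] {π : Perm α} {i j u v : α}
    (hij : ¬ π.SameCycle i j) (huv : π.SameCycle u v) : (π * swap i j).SameCycle u v := by
  set σ := π * swap i j
  have hmerge : σ.SameCycle i j := sameCycle_mul_swap_self hij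
  have hstep : ∀ w, σ.SameCycle w (π w) := by
    intro w
    by_cases hwi : w = i
    · have : π w = σ j := by simp [σ, mul_apply, hwi]
      rw [this, hwi]
      exact hmerge.trans (sameCycle_apply_right.2 (SameCycle.refl _ _))
    by_cases hwj : w = j
    · have : π w = σ i := by simp [σ, mul_apply, hwj]
      rw [this, hwj]
      exact hmerge.symm.trans (sameCycle_apply_right.2 (SameCycle.refl _ _))
    have : π w = σ w := by simp [σ, mul_apply, swap_apply_of_ne_of_ne hwi hwj]
    rw [this]
    exact sameCycle_apply_right.2 (SameCycle.refl _ _)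
  obtain ⟨k, -, rfl⟩ := huv.exists_pow_eq'
  clear huv
  induction k with
  | zero => exact SameCycle.refl _ _
  | succ k ih => simpa [pow_succ', mul_apply] using ih.trans (hstep _)

theorem SameCycle.mem_of_mapsTo [Finite α] {π : Perm α} {S : Set α} {i j : α}
    (hS : Set.MapsTo π S S) (hij : π.SameCycle i j) (hi : i ∈ S) : j ∈ S := by
  obtain ⟨k, -, rfl⟩ := hij.exists_pow_eq'
  simpa [← coe_pow] using hS.iterate k hi

theorem not_sameCycle_of_forall_apply_mem_iff [Finite α] {π : Perm α} {S : Finset α}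
    {i j : α} (hS : ∀ k, π k ∈ S ↔ k ∈ S) (hi : i ∈ S) (hj : j ∉ S) : ¬ π.SameCycle i j :=
  fun h => hj (h.mem_of_mapsTo (S := S) (fun k hk => (hS k).2 hk) hi)

theorem apply_mem_singleton_iff_of_apply_eq_self [DecidableEq α] {π : Perm α} {i : α}
    (hi : π i = i) (k : α) : π k ∈ ({i} : Finset α) ↔ k ∈ ({i} : Finset α) := by
  simpa only [mem_singleton] using π.injective.eq_iff' hi

theorem swap_apply_mem_iff [DecidableEq α] {S : Finset α} {i k : α} (h : i ∈ S ↔ k ∈ S)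
    (m : α) : swap i k m ∈ S ↔ m ∈ S := by
  rw [swap_apply_def]
  split_ifs with h₁ h₂ <;> subst_vars <;> tauto

variable [Fintype α] [DecidableEq α]

def sameCyclePairs (π : Perm α) : ℕ := #{p : α × α | π.SameCycle p.1 p.2}

theorem sameCyclePairs_lt_mul_swap {π : Perm α} {i j : α} (hij : ¬ π.SameCycle i j) :
    sameCyclePairs π < sameCyclePairs (π * swap i j) :=
  card_lt_card ⟨fun _ hp => mem_filter.2 ⟨mem_univ _, (mem_filter.1 hp).2.mul_swap hij⟩,
    fun h => hij (mem_filter.1 (h (mem_filter.2 ⟨mem_univ (i, j), sameCycle_mul_swap_self hij⟩))).2⟩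

end Equiv.Perm

namespace Finset

theorem mul_card_le_two_mul_sum {ι : Type*} [DecidableEq ι] {S : Finset ι} {g : ι → ℕ} {c : ℕ}
    (hS : 2 ≤ #S) (hg : ∀ i ∈ S, ∀ j ∈ S, i ≠ j → c ≤ g i + g j) :
    c * #S ≤ 2 * ∑ i ∈ S, g i := by
  obtain ⟨i₀, hi₀, hmin⟩ := S.exists_min_image g (card_pos.1 (by omega))
  obtain ⟨t, ht⟩ : ∃ t, #S = t + 2 := ⟨#S - 2, by omega⟩
  have hrest : (t + 1) * (c - g i₀) ≤ ∑ j ∈ S.erase i₀, g j := by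
    have := card_nsmul_le_sum (S.erase i₀) g (c - g i₀) fun j hj => by
      have := hg i₀ hi₀ j (mem_of_mem_erase hj) (ne_of_mem_erase hj).symm
      omega
    rwa [card_erase_of_mem hi₀, ht, smul_eq_mul] at this
  have hlow : (t + 1) * g i₀ ≤ ∑ j ∈ S.erase i₀, g j := by
    have := card_nsmul_le_sum (S.erase i₀) g (g i₀) fun j hj => hmin j (mem_of_mem_erase hj)
    rwa [card_erase_of_mem hi₀, ht, smul_eq_mul] at this
  rw [← add_sum_erase S g hi₀, ht]
  rcases le_or_gt c (2 * g i₀) with h | h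
  · nlinarith
  · obtain ⟨d, rfl⟩ : ∃ d, c = g i₀ + d := ⟨c - g i₀, by omega⟩
    rw [Nat.add_sub_cancel_left] at hrest
    nlinarith

theorem forall_eq_one_of_card_add_one_le {ι : Type*} {C : Finset ι} {p q : ι → ℕ}
    (hC : 2 ≤ #C) (hp : ∀ j, p j ≤ 2) (hq : ∀ j, q j ≤ 2)
    (hsum : ∑ j ∈ C, p j + ∑ j ∈ C, q j ≤ 2 * #C)
    (hpq : ∀ j ∈ C, #C + 1 ≤ ∑ k ∈ C, p k + q j) (hqp : ∀ j ∈ C, #C + 1 ≤ ∑ k ∈ C, q k + p j) :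
    ∀ j ∈ C, p j = 1 ∧ q j = 1 := by
  -- if `∑ f < #C`, every `g j` is at least two, which forces `∑ f = 0`
  have hge : ∀ f g : ι → ℕ, (∀ j, g j ≤ 2) → ∑ j ∈ C, f j + ∑ j ∈ C, g j ≤ 2 * #C →
      (∀ j ∈ C, #C + 1 ≤ ∑ k ∈ C, f k + g j) → #C ≤ ∑ j ∈ C, f j := by
    intro f g hg hfg hf
    by_contra! hlt
    have : 2 * #C ≤ ∑ j ∈ C, g j := by
      simpa [mul_comm] using card_nsmul_le_sum C g 2 fun j hj => by have := hf j hj; omega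
    obtain ⟨k, hk⟩ : C.Nonempty := card_pos.1 (by omega)
    have := hf k hk
    have := hg k
    omega
  have hP := hge p q hq hsum hpq
  have hQ := hge q p hp (by omega) hqp
  have hone : ∀ f : ι → ℕ, (∀ j ∈ C, 1 ≤ f j) → ∑ j ∈ C, f j = #C → ∀ j ∈ C, f j = 1 :=
    fun f hf hf' j hj => ((sum_eq_sum_iff_of_le hf).1 (by simp [hf']) j hj).symm
  exact fun j hj => ⟨hone p (fun k hk => by have := hqp k hk; omega) (by omega) j hj,
    hone q (fun k hk => by have := hpq k hk; omega) (by omega) j hj⟩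

theorem card_compl_singleton_add_one {α : Type*} [Fintype α] [DecidableEq α] (i : α) :
    #({i}ᶜ : Finset α) + 1 = Fintype.card α := by
  rw [card_compl, card_singleton, Nat.sub_add_cancel (Fintype.card_pos_iff.2 ⟨i⟩)]

theorem card_filter_univ_comp_of_injective {ι V : Type*} [Fintype ι] [Fintype V] {f : ι → V}
    (hf : Function.Injective f) {P : V → Prop} [DecidablePred P]
    (hP : ∀ v, P v → ∃ i, v = f i) : #{v | P v} = #{i | P (f i)} :=
  (card_nbij f (fun i hi => by simpa using hi) hf.injOn fun v hv => by
    obtain ⟨i, rfl⟩ := hP v (by simpa using hv)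
    exact ⟨i, by simpa using hv, rfl⟩).symm

end Finset

theorem HasCycle.map {α β : Type*} {A : α → α → Prop} {B : β → β → Prop} {k : ℕ} {g : α → β}
    (hg : Function.Injective g) (hAB : ∀ u v, A u v → B (g u) (g v)) (h : HasCycle A k) :
    HasCycle B k := by
  obtain ⟨hk, f, hf, harc⟩ := h
  exact ⟨hk, g ∘ f, hg.comp hf, fun i => hAB _ _ (harc i)⟩

theorem hasCycle_of_forall_sameCycle {α : Type*} [Fintype α] {A : α → α → Prop} (σ : Perm α)
    (hA : ∀ v, A v (σ v)) (hσ : ∀ u v, σ.SameCycle u v) (h2 : 2 ≤ Fintype.card α) :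
    HasCycle A (Fintype.card α) := by
  obtain ⟨v₀⟩ : Nonempty α := Fintype.card_pos_iff.1 (by omega)
  -- `orbitZPowersEquiv` enumerates the orbit of `v₀`, which is everything, by `ZMod` of its period
  have horbit : MulAction.orbit (Subgroup.zpowers σ) v₀ = Set.univ := by
    refine Set.eq_univ_of_forall fun v => ?_
    obtain ⟨k, hk⟩ := hσ v₀ v
    exact ⟨⟨σ ^ k, Subgroup.zpow_mem_zpowers σ k⟩, hk⟩
  have hp : Function.minimalPeriod (σ • ·) v₀ = Fintype.card α := by
    rw [← Nat.card_zmod (Function.minimalPeriod (σ • ·) v₀),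
      ← Nat.card_congr (MulAction.orbitZPowersEquiv σ v₀), horbit, Nat.card_univ,
      Nat.card_eq_fintype_card]
  have hF : ∀ n : ℤ, ((MulAction.orbitZPowersEquiv σ v₀).symm n : α) = (σ ^ n) v₀ := fun n => by
    rw [MulAction.orbitZPowersEquiv_symm_apply']
    rfl
  rw [← hp]
  refine ⟨hp ▸ h2, fun k => (MulAction.orbitZPowersEquiv σ v₀).symm k,
    Subtype.val_injective.comp (Equiv.injective _), fun k => ?_⟩
  dsimp only
  rw [← ZMod.intCast_zmod_cast k, ← Int.cast_one, ← Int.cast_add, hF, hF, add_comm, zpow_add,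
    zpow_one, mul_apply]
  exact hA _

theorem StrongConn.exists_adj_of_mem_of_notMem {V : Type*} {A : V → V → Prop}
    (h : StrongConn A) {B : Set V} {u v : V} (hu : u ∈ B) (hv : v ∉ B) :
    ∃ p ∈ B, ∃ q ∉ B, A p q := by
  induction h u v with
  | refl => exact absurd hu hv
  | @tail b c _ hbc ih => by_cases hb : b ∈ B; exacts [⟨b, hb, c, hv, hbc⟩, ih hb]

theorem StrongConn.exists_adj_from {V : Type*} {A : V → V → Prop} (h : StrongConn A) {u v : V}
    (huv : u ≠ v) : ∃ w, A u w := by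
  obtain ⟨p, rfl, q, -, hpq⟩ := h.exists_adj_of_mem_of_notMem (B := {u}) rfl huv.symm
  exact ⟨q, hpq⟩

theorem StrongConn.exists_adj_to {V : Type*} {A : V → V → Prop} (h : StrongConn A) {u v : V}
    (huv : u ≠ v) : ∃ w, A w v := by
  obtain ⟨p, -, q, hq, hpq⟩ := h.exists_adj_of_mem_of_notMem (B := {w | w ≠ v}) huv
    (v := v) (by simp)
  obtain rfl : q = v := not_not.1 hq
  exact ⟨p, hpq⟩

section Arcs

variable {V : Type*} {A : V → V → Prop} [DecidableRel A] {u v : V}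

variable (A) in
def arcsBetween (u v : V) : ℕ := (if A u v then 1 else 0) + (if A v u then 1 else 0)

theorem arcsBetween_comm (u v : V) : arcsBetween A u v = arcsBetween A v u := add_comm _ _

theorem arcsBetween_le_two (u v : V) : arcsBetween A u v ≤ 2 := by
  unfold arcsBetween; split_ifs <;> simp

theorem arcsBetween_eq_two_iff : arcsBetween A u v = 2 ↔ A u v ∧ A v u := by
  unfold arcsBetween; split_ifs <;> simp_all

theorem adj_of_arcsBetween_eq_one (h : arcsBetween A u v = 1) (huv : ¬ A u v) : A v u := by
  unfold arcsBetween at h; split_ifs at h <;> simp_all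

theorem not_adj_of_arcsBetween_eq_one (h : arcsBetween A u v = 1) (huv : A u v) : ¬ A v u := by
  unfold arcsBetween at h; split_ifs at h <;> simp_all

theorem arcsBetween_eq_zero_iff : arcsBetween A u v = 0 ↔ ¬ A u v ∧ ¬ A v u := by
  unfold arcsBetween; split_ifs <;> simp_all

end Arcs

section IndexedBipartite

variable {V : Type*} {A : V → V → Prop} {a : ℕ} {x y : Fin a → V}

theorem IndexedBipartite.symm (hb : IndexedBipartite A x y) : IndexedBipartite A y x :=
  ⟨hb.2.1, hb.1, fun i j h => hb.2.2.1 j i h.symm, fun v => (hb.2.2.2.1 v).symm,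
    fun u v h => (hb.2.2.2.2 u v h).symm⟩

theorem IndexedBipartite.exists_eq_of_adj_left (hb : IndexedBipartite A x y) {i : Fin a}
    {v : V} (h : A (x i) v) : ∃ m, v = y m := by
  rcases hb.2.2.2.2 _ _ h with ⟨_, m, -, rfl⟩ | ⟨k, _, hk, -⟩
  exacts [⟨m, rfl⟩, absurd hk (hb.2.2.1 i k)]

theorem IndexedBipartite.exists_eq_of_adj_right (hb : IndexedBipartite A x y) {i : Fin a}
    {v : V} (h : A v (x i)) : ∃ m, v = y m := by
  rcases hb.2.2.2.2 _ _ h with ⟨_, k, -, hk⟩ | ⟨m, _, rfl, -⟩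
  exacts [absurd hk (hb.2.2.1 i k), ⟨m, rfl⟩]

theorem IndexedBipartite.exists_arc_leaving (hb : IndexedBipartite A x y) (hs : StrongConn A)
    (φ : Perm (Fin a)) {S : Finset (Fin a)} {i j : Fin a} (hi : i ∈ S) (hj : j ∉ S) :
    ∃ k ∈ S, ∃ l ∉ S, A (x k) (y (φ l)) ∨ A (y (φ k)) (x l) := by
  obtain ⟨p, hp, q, hq, hpq⟩ := hs.exists_adj_of_mem_of_notMem
    (B := {v | (∃ k ∈ S, v = x k) ∨ ∃ k ∈ S, v = y (φ k)}) (Or.inl ⟨i, hi, rfl⟩)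
    (v := x j) (by rintro (⟨k, hk, e⟩ | ⟨k, -, e⟩); exacts [hj (hb.1 e ▸ hk), hb.2.2.1 _ _ e])
  rcases hp with ⟨k, hk, rfl⟩ | ⟨k, hk, rfl⟩
  · obtain ⟨m, rfl⟩ := hb.exists_eq_of_adj_left hpq
    exact ⟨k, hk, φ.symm m, fun hm => hq (Or.inr ⟨_, hm, by simp⟩), Or.inl (by simpa using hpq)⟩
  · obtain ⟨l, rfl⟩ := hb.symm.exists_eq_of_adj_left hpq
    exact ⟨k, hk, l, fun hl => hq (Or.inl ⟨l, hl, rfl⟩), Or.inr hpq⟩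

variable [Fintype V] [DecidableRel A]

theorem IndexedBipartite.deg_eq (hb : IndexedBipartite A x y) (i : Fin a) :
    deg A (x i) = #{m | A (x i) (y m)} + #{m | A (y m) (x i)} := by
  rw [deg, outDeg, inDeg,
    card_filter_univ_comp_of_injective hb.2.1 fun _ => hb.exists_eq_of_adj_left,
    card_filter_univ_comp_of_injective hb.2.1 fun _ => hb.exists_eq_of_adj_right]

theorem IndexedBipartite.deg_eq_sum (hb : IndexedBipartite A x y) (i : Fin a) :
    deg A (x i) = ∑ m, arcsBetween A (x i) (y m) := by
  rw [hb.deg_eq, card_filter, card_filter, ← sum_add_distrib]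
  rfl

theorem IndexedBipartite.deg_le_add (hb : IndexedBipartite A x y) (i m : Fin a) :
    deg A (x i) ≤ 2 * (a - 1) + arcsBetween A (x i) (y m) := by
  rw [hb.deg_eq_sum, ← add_sum_erase _ _ (mem_univ m), add_comm]
  gcongr
  simpa [card_erase_of_mem, mul_comm] using
    sum_le_card_nsmul (univ.erase m) _ 2 fun k _ => arcsBetween_le_two (x i) (y k)

theorem IndexedBipartite.deg_le_two_mul_card (hb : IndexedBipartite A x y) (φ : Perm (Fin a))
    {T : Finset (Fin a)} {i : Fin a}
    (hi : ∀ j ∉ T, ¬ A (x i) (y (φ j)) ∧ ¬ A (y (φ j)) (x i)) : deg A (x i) ≤ 2 * #T := by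
  rw [hb.deg_eq_sum, ← Equiv.sum_comp φ, ← sum_add_sum_compl T,
    sum_eq_zero fun j hj => arcsBetween_eq_zero_iff.2 (hi j (mem_compl.1 hj)), add_zero,
    mul_comm]
  exact sum_le_card_nsmul _ _ 2 fun j _ => arcsBetween_le_two _ _

theorem IndexedBipartite.three_mul_le_four_mul_card (hb : IndexedBipartite A x y)
    (hx : ∀ i j, i ≠ j → 3 * a ≤ deg A (x i) + deg A (x j)) (φ : Perm (Fin a))
    {T : Finset (Fin a)} (hT : 2 ≤ #T)
    (hiso : ∀ i ∈ T, ∀ j ∉ T, ¬ A (x i) (y (φ j)) ∧ ¬ A (y (φ j)) (x i)) : 3 * a ≤ 4 * #T := by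
  obtain ⟨i, hi, i', hi', hii'⟩ := one_lt_card.1 hT
  have := hx i i' hii'
  have := hb.deg_le_two_mul_card φ (hiso i hi)
  have := hb.deg_le_two_mul_card φ (hiso i' hi')
  omega

theorem IndexedBipartite.card_le_card_biUnion (hb : IndexedBipartite A x y) (hs : StrongConn A)
    (hx : ∀ i j, i ≠ j → 3 * a ≤ deg A (x i) + deg A (x j))
    (hy : ∀ m n, m ≠ n → 3 * a ≤ deg A (y m) + deg A (y n)) (S : Finset (Fin a)) :
    #S ≤ #(S.biUnion fun i => {m | A (x i) (y m)}) := by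
  by_contra! hSN
  set N := S.biUnion fun i => ({m | A (x i) (y m)} : Finset (Fin a))
  have hmemN : ∀ {i m}, i ∈ S → A (x i) (y m) → m ∈ N := fun hi h =>
    mem_biUnion.2 ⟨_, hi, by simpa using h⟩
  have hle : ∀ s : Finset (Fin a), #s ≤ a := fun s => (card_le_univ s).trans_eq (by simp)
  have hout : ∀ i ∈ S, deg A (x i) ≤ #N + a := fun i hi => by
    rw [hb.deg_eq]
    exact add_le_add (card_le_card fun m hm => hmemN hi (by simpa using hm)) (hle _)
  -- the in-neighbours of a `y m` outside `N` lie outside `S`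
  have hin : ∀ m ∉ N, deg A (y m) ≤ a + (a - #S) := fun m hm => by
    have : ({i | A (x i) (y m)} : Finset (Fin a)) ⊆ Sᶜ := fun i hi =>
      mem_compl.2 fun hiS => hm (hmemN hiS (by simpa using hi))
    rw [hb.symm.deg_eq]
    exact add_le_add (hle _) ((card_le_card this).trans_eq (by simp [card_compl]))
  rcases lt_or_ge #S 2 with hS1 | hS2
  · obtain ⟨i, hi⟩ : S.Nonempty := card_pos.1 (by omega)
    obtain ⟨w, hw⟩ := hs.exists_adj_from (hb.2.2.1 i i)
    obtain ⟨m, rfl⟩ := hb.exists_eq_of_adj_left hw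
    have := card_pos.2 ⟨m, hmemN hi hw⟩
    omega
  obtain ⟨i, hi, i', hi', hii'⟩ := one_lt_card.1 hS2
  have := hx i i' hii'
  have := hout i hi
  have := hout i' hi'
  have hNc : #Nᶜ = a - #N := by simp [card_compl]
  rcases lt_or_ge #Nᶜ 2 with hN1 | hN2
  · -- then `S` is everything and the `y m` outside `N` has no in-neighbour at all
    obtain ⟨m, hm⟩ : Nᶜ.Nonempty := card_pos.1 (by have := hle S; omega)
    obtain ⟨w, hw⟩ := hs.exists_adj_to (hb.2.2.1 i m)
    obtain ⟨k, rfl⟩ := hb.symm.exists_eq_of_adj_right hw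
    have hSu : S = univ := eq_univ_of_card S (by have := hle S; simp only [Fintype.card_fin]; omega)
    exact mem_compl.1 hm (hmemN (hSu ▸ mem_univ k) hw)
  · obtain ⟨m, hm, m', hm', hmm'⟩ := one_lt_card.1 hN2
    have := hy m m' hmm'
    have := hin m (mem_compl.1 hm)
    have := hin m' (mem_compl.1 hm')
    have := hle S
    omega

theorem IndexedBipartite.exists_perm_adj (hb : IndexedBipartite A x y) (hs : StrongConn A)
    (hx : ∀ i j, i ≠ j → 3 * a ≤ deg A (x i) + deg A (x j))
    (hy : ∀ m n, m ≠ n → 3 * a ≤ deg A (y m) + deg A (y n)) :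
    ∃ φ : Perm (Fin a), ∀ i, A (x i) (y (φ i)) := by
  obtain ⟨f, hf, hft⟩ := (all_card_le_biUnion_card_iff_exists_injective _).1
    (hb.card_le_card_biUnion hs hx hy)
  exact ⟨.ofBijective f (Finite.injective_iff_bijective.1 hf), fun i => by simpa using hft i⟩

theorem IndexedBipartite.sum_deg_eq (hb : IndexedBipartite A x y) (φ : Perm (Fin a))
    (S : Finset (Fin a)) :
    ∑ i ∈ S, (deg A (x i) + deg A (y (φ i))) =
      2 * ∑ i ∈ S, ∑ j ∈ S, arcsBetween A (x i) (y (φ j)) +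
        ∑ i ∈ S, ∑ j ∈ Sᶜ, (arcsBetween A (x i) (y (φ j)) + arcsBetween A (y (φ i)) (x j)) := by
  have hx : ∀ i, deg A (x i) = ∑ j ∈ S, arcsBetween A (x i) (y (φ j)) +
      ∑ j ∈ Sᶜ, arcsBetween A (x i) (y (φ j)) := fun i => by
    rw [sum_add_sum_compl, hb.deg_eq_sum, ← Equiv.sum_comp φ]
  have hy : ∀ i, deg A (y (φ i)) = ∑ j ∈ S, arcsBetween A (x j) (y (φ i)) +
      ∑ j ∈ Sᶜ, arcsBetween A (y (φ i)) (x j) := fun i => by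
    simp only [arcsBetween_comm (x _)]
    rw [sum_add_sum_compl, hb.symm.deg_eq_sum]
  simp only [hx, hy, sum_add_distrib]
  rw [sum_comm (s := S) (t := S) (f := fun i j => arcsBetween A (x j) (y (φ i)))]
  ring

end IndexedBipartite

section CycleFactor

variable {V : Type*} {A : V → V → Prop} {a : ℕ} {x y : Fin a → V} {φ ψ : Perm (Fin a)}

/-- The arcs `x i → y (φ i)` and `y m → x (ψ m)` cover every vertex by disjoint cycles, which
correspond to the cycles of `ψ * φ` on the indices of `X`. -/
def IsCycleFactor (A : V → V → Prop) (x y : Fin a → V) (φ ψ : Perm (Fin a)) : Prop :=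
  (∀ i, A (x i) (y (φ i))) ∧ ∀ m, A (y m) (x (ψ m))

/-- `sameCyclePairs (ψ * φ)` is a quarter of the sum of the squared lengths of the cycles. -/
def IsMaxCycleFactor (A : V → V → Prop) (x y : Fin a → V) (φ ψ : Perm (Fin a)) : Prop :=
  IsCycleFactor A x y φ ψ ∧ ∀ φ' ψ', IsCycleFactor A x y φ' ψ' →
    sameCyclePairs (ψ' * φ') ≤ sameCyclePairs (ψ * φ)

theorem IsCycleFactor.exists_isMaxCycleFactor (h : IsCycleFactor A x y φ ψ) :
    ∃ φ' ψ', IsMaxCycleFactor A x y φ' ψ' := by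
  classical
  obtain ⟨⟨φ', ψ'⟩, hmem, hmax⟩ := exists_max_image {p : Perm (Fin a) × Perm (Fin a) |
    IsCycleFactor A x y p.1 p.2} (fun p => sameCyclePairs (p.2 * p.1)) ⟨(φ, ψ), by simpa using h⟩
  exact ⟨φ', ψ', (mem_filter.1 hmem).2, fun φ'' ψ'' h'' => hmax (φ'', ψ'') (by simpa using h'')⟩

theorem IsCycleFactor.hasCycle (hf : IsCycleFactor A x y φ ψ) (hb : IndexedBipartite A x y)
    (ha : 1 ≤ a) (hπ : ∀ i j, (ψ * φ).SameCycle i j) : HasCycle A (2 * a) := by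
  -- the factor as a permutation of `Fin a ⊕ Fin a`, which indexes `X` and `Y` together
  set τ : Perm (Fin a ⊕ Fin a) := (Equiv.sumCongr φ ψ).trans (Equiv.sumComm _ _)
  have hpow : ∀ (k : ℕ) i, (τ ^ (2 * k)) (.inl i) = .inl (((ψ * φ) ^ k) i) := by
    intro k
    induction k with
    | zero => simp
    | succ k ih =>
      intro i
      have h2 : (τ ^ 2) (.inl i) = .inl ((ψ * φ) i) := rfl
      rw [mul_add, mul_one, pow_add, mul_apply, h2, ih, pow_succ, mul_apply]
      rfl
  have hl : ∀ i j, τ.SameCycle (.inl i) (.inl j) := fun i j => by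
    obtain ⟨k, -, hk⟩ := (hπ i j).exists_pow_eq'
    exact ⟨(2 * k : ℕ), by rw [zpow_natCast, hpow, hk]⟩
  have h₀ : ∀ z, τ.SameCycle (.inl ⟨0, ha⟩) z := by
    rintro (i | m)
    exacts [hl _ i, (hl _ (ψ m)).trans (sameCycle_apply_right.2 (SameCycle.refl τ (.inr m))).symm]
  have := hasCycle_of_forall_sameCycle (A := fun z w => A (Sum.elim x y z) (Sum.elim x y w)) τ
    (by rintro (i | m); exacts [hf.1 i, hf.2 m]) (fun z w => (h₀ z).symm.trans (h₀ w))
    (by simp only [Fintype.card_sum, Fintype.card_fin]; omega)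
  rw [Fintype.card_sum, Fintype.card_fin, ← two_mul] at this
  exact this.map (hb.1.sumElim hb.2.1 hb.2.2.1) fun _ _ h => h

theorem IsMaxCycleFactor.not_isCycleFactor (h : IsMaxCycleFactor A x y φ ψ) {i j : Fin a}
    (hij : ¬ (ψ * φ).SameCycle i j) {φ' ψ' : Perm (Fin a)} (he : ψ' * φ' = ψ * φ * swap i j) :
    ¬ IsCycleFactor A x y φ' ψ' := fun h' =>
  (h.2 φ' ψ' h').not_gt (he ▸ sameCyclePairs_lt_mul_swap hij)

theorem IsMaxCycleFactor.not_adj_x (h : IsMaxCycleFactor A x y φ ψ) {i j : Fin a}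
    (hij : ¬ (ψ * φ).SameCycle i j) : ¬ (A (x i) (y (φ j)) ∧ A (x j) (y (φ i))) := by
  rintro ⟨h₁, h₂⟩
  refine h.not_isCycleFactor hij (φ' := φ * swap i j) (mul_assoc _ _ _).symm ⟨fun k => ?_, h.1.2⟩
  rw [mul_apply, swap_apply_def]
  split_ifs with hki hkj
  exacts [hki ▸ h₁, hkj ▸ h₂, h.1.1 k]

theorem IsMaxCycleFactor.not_adj_y (h : IsMaxCycleFactor A x y φ ψ) {i j : Fin a}
    (hij : ¬ (ψ * φ).SameCycle i j) :
    ¬ (A (y (φ i)) (x ((ψ * φ) j)) ∧ A (y (φ j)) (x ((ψ * φ) i))) := by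
  rintro ⟨h₁, h₂⟩
  refine h.not_isCycleFactor hij (ψ' := ψ * swap (φ i) (φ j)) (φ' := φ)
    (by rw [swap_apply_apply]; group) ⟨h.1.1, fun m => ?_⟩
  rw [mul_apply, swap_apply_def]
  split_ifs with hmi hmj
  exacts [hmi ▸ h₁, hmj ▸ h₂, h.1.2 m]

/-- Inside complete blocks the factor can be rerouted without changing its cycles. -/
theorem IsMaxCycleFactor.exists_apply_eq_of_complete (h : IsMaxCycleFactor A x y φ ψ)
    {S : Finset (Fin a)} (hS : ∀ i, (ψ * φ) i ∈ S ↔ i ∈ S)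
    (hcompl : ∀ i j, (i ∈ S ↔ j ∈ S) → A (x i) (y (φ j)) ∧ A (y (φ j)) (x i))
    {i j k l : Fin a} (hi : i ∈ S) (hj : j ∉ S) (hk : k ∈ S) (hl : l ∉ S) :
    ∃ φ', IsMaxCycleFactor A x y φ' (ψ * φ * φ'⁻¹) ∧ φ' i = φ k ∧ φ' j = φ l := by
  set τ := swap i k * swap j l
  have hτ : ∀ m, τ m ∈ S ↔ m ∈ S := fun m => by
    rw [mul_apply, swap_apply_mem_iff (iff_of_true hi hk), swap_apply_mem_iff (iff_of_false hj hl)]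
  have hne : ∀ {u v}, u ∈ S → v ∉ S → u ≠ v := fun hu hv e => hv (e ▸ hu)
  refine ⟨φ * τ, ⟨⟨fun m => (hcompl m (τ m) (hτ m).symm).1, fun m => ?_⟩, fun φ' ψ' h' => ?_⟩,
    ?_, ?_⟩
  · obtain ⟨m, rfl⟩ := φ.surjective m
    have : (ψ * φ * (φ * τ)⁻¹) (φ m) = (ψ * φ) (τ⁻¹ m) := by simp [mul_apply]
    rw [this]
    exact (hcompl _ m ((hS _).trans (by simpa using (hτ (τ⁻¹ m)).symm))).2
  · rw [inv_mul_cancel_right]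
    exact h.2 φ' ψ' h'
  · simp [τ, mul_apply, swap_apply_of_ne_of_ne (hne hi hj) (hne hi hl)]
  · simp [τ, mul_apply, swap_apply_of_ne_of_ne (hne hi hl).symm (hne hk hl).symm]

theorem IsMaxCycleFactor.not_adj_x_of_complete (h : IsMaxCycleFactor A x y φ ψ)
    {S : Finset (Fin a)} (hS : ∀ i, (ψ * φ) i ∈ S ↔ i ∈ S)
    (hcompl : ∀ i j, (i ∈ S ↔ j ∈ S) → A (x i) (y (φ j)) ∧ A (y (φ j)) (x i))
    {i j k l : Fin a} (hi : i ∈ S) (hj : j ∉ S) (hk : k ∈ S) (hl : l ∉ S) :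
    ¬ (A (x i) (y (φ l)) ∧ A (x j) (y (φ k))) := by
  rintro ⟨hil, hjk⟩
  obtain ⟨φ', h', hφi, hφj⟩ := h.exists_apply_eq_of_complete hS hcompl hi hj hk hl
  refine h'.not_adj_x ?_ ⟨hφj ▸ hil, hφi ▸ hjk⟩
  rw [inv_mul_cancel_right]
  exact not_sameCycle_of_forall_apply_mem_iff hS hi hj

theorem IsMaxCycleFactor.not_adj_y_of_complete (h : IsMaxCycleFactor A x y φ ψ)
    {S : Finset (Fin a)} (hS : ∀ i, (ψ * φ) i ∈ S ↔ i ∈ S)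
    (hcompl : ∀ i j, (i ∈ S ↔ j ∈ S) → A (x i) (y (φ j)) ∧ A (y (φ j)) (x i))
    {i j k l : Fin a} (hi : i ∈ S) (hj : j ∉ S) (hk : k ∈ S) (hl : l ∉ S) :
    ¬ (A (y (φ i)) (x l) ∧ A (y (φ j)) (x k)) := by
  rintro ⟨hil, hjk⟩
  set π := ψ * φ
  have hπ : ∀ m, π⁻¹ m ∈ S ↔ m ∈ S := fun m => by simpa using (hS (π⁻¹ m)).symm
  obtain ⟨φ', h', hφk, hφl⟩ := h.exists_apply_eq_of_complete hS hcompl ((hπ k).2 hk)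
    (mt (hπ l).1 hl) hi hj
  have := h'.not_adj_y (by
    rw [inv_mul_cancel_right]
    exact not_sameCycle_of_forall_apply_mem_iff hS ((hπ k).2 hk) (mt (hπ l).1 hl))
  rw [inv_mul_cancel_right, hφk, hφl] at this
  simp only [π, coe_inv, apply_symm_apply] at this
  exact this ⟨hil, hjk⟩

section Counting

variable [DecidableRel A]

theorem IsMaxCycleFactor.sum_cross_le (h : IsMaxCycleFactor A x y φ ψ) {S : Finset (Fin a)}
    (hS : ∀ i, (ψ * φ) i ∈ S ↔ i ∈ S) :
    ∑ i ∈ S, ∑ j ∈ Sᶜ, (arcsBetween A (x i) (y (φ j)) + arcsBetween A (y (φ i)) (x j)) ≤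
      2 * (#S * #Sᶜ) := by
  set π := ψ * φ
  have hns : ∀ i ∈ S, ∀ j ∈ Sᶜ, ¬ π.SameCycle i j := fun i hi j hj =>
    not_sameCycle_of_forall_apply_mem_iff hS hi (mem_compl.1 hj)
  have hle : ∀ f : Fin a → Fin a → ℕ, (∀ i ∈ S, ∀ j ∈ Sᶜ, f i j ≤ 1) →
      ∑ i ∈ S, ∑ j ∈ Sᶜ, f i j ≤ #S * #Sᶜ := fun f hf => by
    simpa using sum_le_card_nsmul S _ _ fun i hi =>
      (sum_le_card_nsmul Sᶜ _ 1 (hf i hi)).trans_eq (by simp)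
  have hX := hle (fun i j => (if A (x i) (y (φ j)) then 1 else 0) +
      (if A (x j) (y (φ i)) then 1 else 0)) fun i hi j hj => by
    have := h.not_adj_x (hns i hi j hj)
    split_ifs with h₁ h₂
    · exact absurd ⟨h₁, h₂⟩ this
    all_goals simp
  -- the arcs from `Y` to `X` pair up once their heads are shifted along `π`
  have hY := hle (fun i j => (if A (y (φ j)) (x (π i)) then 1 else 0) +
      (if A (y (φ i)) (x (π j)) then 1 else 0)) fun i hi j hj => by
    have := h.not_adj_y (hns i hi j hj)
    split_ifs with h₁ h₂
    · exact absurd ⟨h₂, h₁⟩ this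
    all_goals simp
  have hshift₁ : ∑ i ∈ S, ∑ j ∈ Sᶜ, (if A (y (φ j)) (x (π i)) then 1 else 0) =
      ∑ i ∈ S, ∑ j ∈ Sᶜ, (if A (y (φ j)) (x i) then 1 else 0) :=
    sum_equiv π (fun i => (hS i).symm) fun _ _ => rfl
  have hshift₂ : ∀ i, ∑ j ∈ Sᶜ, (if A (y (φ i)) (x (π j)) then 1 else 0) =
      ∑ j ∈ Sᶜ, (if A (y (φ i)) (x j) then 1 else 0) := fun i =>
    sum_equiv π (fun j => by simp [hS]) fun _ _ => rfl
  simp only [sum_add_distrib, hshift₁, hshift₂] at hX hY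
  simp only [arcsBetween, sum_add_distrib]
  linarith

theorem IsCycleFactor.arcsBetween_eq_two_of_apply_eq_self (hf : IsCycleFactor A x y φ ψ)
    {i₀ : Fin a} (hfix : (ψ * φ) i₀ = i₀) : arcsBetween A (x i₀) (y (φ i₀)) = 2 :=
  arcsBetween_eq_two_iff.2 ⟨hf.1 i₀, by simpa [← mul_apply, hfix] using hf.2 (φ i₀)⟩

variable [Fintype V]

theorem IsMaxCycleFactor.three_mul_card_le (h : IsMaxCycleFactor A x y φ ψ)
    (hb : IndexedBipartite A x y) (hx : ∀ i j, i ≠ j → 3 * a ≤ deg A (x i) + deg A (x j))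
    (hy : ∀ m n, m ≠ n → 3 * a ≤ deg A (y m) + deg A (y n)) {S : Finset (Fin a)}
    (hS : ∀ i, (ψ * φ) i ∈ S ↔ i ∈ S) (hS2 : 2 ≤ #S) :
    3 * a * #S ≤ 2 * ∑ i ∈ S, ∑ j ∈ S, arcsBetween A (x i) (y (φ j)) + 2 * (#S * #Sᶜ) := by
  have h₁ := mul_card_le_two_mul_sum hS2 fun i _ j _ hij => hx i j hij
  have h₂ := mul_card_le_two_mul_sum (g := fun i => deg A (y (φ i))) hS2 fun i _ j _ hij =>
    hy _ _ (φ.injective.ne hij)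
  have h₃ := hb.sum_deg_eq φ S
  rw [sum_add_distrib] at h₃
  linarith [h.sum_cross_le hS]

theorem IsMaxCycleFactor.card_compl_le (h : IsMaxCycleFactor A x y φ ψ)
    (hb : IndexedBipartite A x y) (hx : ∀ i j, i ≠ j → 3 * a ≤ deg A (x i) + deg A (x j))
    (hy : ∀ m n, m ≠ n → 3 * a ≤ deg A (y m) + deg A (y n)) {S : Finset (Fin a)}
    (hS : ∀ i, (ψ * φ) i ∈ S ↔ i ∈ S) (hS2 : 2 ≤ #S) : #Sᶜ ≤ #S := by
  have := h.three_mul_card_le hb hx hy hS hS2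
  have : ∑ i ∈ S, ∑ j ∈ S, arcsBetween A (x i) (y (φ j)) ≤ #S * (#S * 2) :=
    sum_le_card_nsmul _ _ _ fun _ _ => sum_le_card_nsmul _ _ _ fun _ _ => arcsBetween_le_two _ _
  have : a * #S = (#S + #Sᶜ) * #S := by rw [card_add_card_compl, Fintype.card_fin]
  nlinarith

theorem IsMaxCycleFactor.adj_of_card_compl_eq (h : IsMaxCycleFactor A x y φ ψ)
    (hb : IndexedBipartite A x y) (hx : ∀ i j, i ≠ j → 3 * a ≤ deg A (x i) + deg A (x j))
    (hy : ∀ m n, m ≠ n → 3 * a ≤ deg A (y m) + deg A (y n)) {S : Finset (Fin a)}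
    (hS : ∀ i, (ψ * φ) i ∈ S ↔ i ∈ S) (hS2 : 2 ≤ #S) (hc : #Sᶜ = #S) {i j : Fin a}
    (hi : i ∈ S) (hj : j ∈ S) : A (x i) (y (φ j)) ∧ A (y (φ j)) (x i) := by
  rw [← arcsBetween_eq_two_iff]
  by_contra hne
  have hlt : ∑ k ∈ S, ∑ l ∈ S, arcsBetween A (x k) (y (φ l)) < ∑ k ∈ S, #S * 2 := by
    refine sum_lt_sum (fun k _ => sum_le_card_nsmul _ _ _ fun _ _ => arcsBetween_le_two _ _)
      ⟨i, hi, ?_⟩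
    simpa using sum_lt_sum (f := fun l => arcsBetween A (x i) (y (φ l))) (g := fun _ => 2)
      (fun _ _ => arcsBetween_le_two _ _) ⟨j, hj, lt_of_le_of_ne (arcsBetween_le_two _ _) hne⟩
  have := h.three_mul_card_le hb hx hy hS hS2
  have : a * #S = (#S + #Sᶜ) * #S := by rw [card_add_card_compl, Fintype.card_fin]
  simp only [sum_const, smul_eq_mul] at hlt
  rw [hc] at *
  nlinarith

theorem IsMaxCycleFactor.card_compl_eq (h : IsMaxCycleFactor A x y φ ψ)
    (hb : IndexedBipartite A x y) (hx : ∀ i j, i ≠ j → 3 * a ≤ deg A (x i) + deg A (x j))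
    (hy : ∀ m n, m ≠ n → 3 * a ≤ deg A (y m) + deg A (y n)) {S : Finset (Fin a)}
    (hS : ∀ i, (ψ * φ) i ∈ S ↔ i ∈ S) (hS2 : 2 ≤ #S) (hSc2 : 2 ≤ #Sᶜ) : #Sᶜ = #S :=
  le_antisymm (h.card_compl_le hb hx hy hS hS2) <| by
    simpa using h.card_compl_le hb hx hy (fun i => by rw [mem_compl, mem_compl, hS]) hSc2

theorem IsMaxCycleFactor.adj_of_mem_iff (h : IsMaxCycleFactor A x y φ ψ)
    (hb : IndexedBipartite A x y) (hx : ∀ i j, i ≠ j → 3 * a ≤ deg A (x i) + deg A (x j))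
    (hy : ∀ m n, m ≠ n → 3 * a ≤ deg A (y m) + deg A (y n)) {S : Finset (Fin a)}
    (hS : ∀ i, (ψ * φ) i ∈ S ↔ i ∈ S) (hS2 : 2 ≤ #S) (hSc2 : 2 ≤ #Sᶜ) {i j : Fin a}
    (hij : i ∈ S ↔ j ∈ S) : A (x i) (y (φ j)) ∧ A (y (φ j)) (x i) := by
  have hc := h.card_compl_eq hb hx hy hS hS2 hSc2
  by_cases hi : i ∈ S
  · exact h.adj_of_card_compl_eq hb hx hy hS hS2 hc hi (hij.1 hi)
  · exact h.adj_of_card_compl_eq hb hx hy (fun i => by rw [mem_compl, mem_compl, hS]) hSc2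
      (by simp [hc]) (mem_compl.2 hi) (mem_compl.2 (mt hij.2 hi))

theorem IsMaxCycleFactor.card_lt_two_or_card_compl_lt_two (h : IsMaxCycleFactor A x y φ ψ)
    (hb : IndexedBipartite A x y) (hs : StrongConn A)
    (hx : ∀ i j, i ≠ j → 3 * a ≤ deg A (x i) + deg A (x j))
    (hy : ∀ m n, m ≠ n → 3 * a ≤ deg A (y m) + deg A (y n)) {S : Finset (Fin a)}
    (hS : ∀ i, (ψ * φ) i ∈ S ↔ i ∈ S) : #S < 2 ∨ #Sᶜ < 2 := by
  by_contra! ⟨hS2, hSc2⟩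
  have hcompl := fun i j => h.adj_of_mem_iff hb hx hy hS hS2 hSc2 (i := i) (j := j)
  -- the side `T` whose `x`-vertices only see `y (φ T)` would have too small degrees
  have hiso : ∀ T : Finset (Fin a), #T = #S →
      (∀ i ∈ T, ∀ j ∉ T, ¬ A (x i) (y (φ j)) ∧ ¬ A (y (φ j)) (x i)) → False := fun T hT hT' => by
    have := hb.three_mul_le_four_mul_card hx φ (by omega) hT'
    have := h.card_compl_eq hb hx hy hS hS2 hSc2
    have := (card_add_card_compl S).trans (Fintype.card_fin a)
    omega
  obtain ⟨i, hi⟩ : S.Nonempty := card_pos.1 (by omega)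
  obtain ⟨j, hj⟩ : Sᶜ.Nonempty := card_pos.1 (by omega)
  obtain ⟨k, hk, l, hl, hkl⟩ := hb.exists_arc_leaving hs φ hi (mem_compl.1 hj)
  obtain ⟨k', hk', l', hl', hkl'⟩ := hb.exists_arc_leaving hs φ hj (by simpa using hi)
  rw [mem_compl] at hk'
  rw [notMem_compl] at hl'
  by_cases hXS : ∃ i ∈ S, ∃ l ∉ S, A (x i) (y (φ l))
  · -- no `x`-arc leaves `Sᶜ`, so a `y`-arc does, so none leaves `S`: `Sᶜ` is isolated
    obtain ⟨i₁, hi₁, l₁, hl₁, hil₁⟩ := hXS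
    have hXSc : ∀ j ∉ S, ∀ k ∈ S, ¬ A (x j) (y (φ k)) := fun j hj k hk hjk =>
      h.not_adj_x_of_complete hS hcompl hi₁ hj hk hl₁ ⟨hil₁, hjk⟩
    have hyk' := hkl'.resolve_left (hXSc k' hk' l' hl')
    exact hiso Sᶜ (h.card_compl_eq hb hx hy hS hS2 hSc2) fun i hi j hj =>
      ⟨hXSc i (mem_compl.1 hi) j (notMem_compl.1 hj), fun hji => h.not_adj_y_of_complete hS
        hcompl (notMem_compl.1 hj) hk' hl' (mem_compl.1 hi) ⟨hji, hyk'⟩⟩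
  · have hykl := hkl.resolve_left fun h => hXS ⟨k, hk, l, hl, h⟩
    exact hiso S rfl fun i hi j hj => ⟨fun hij => hXS ⟨i, hi, j, hj, hij⟩,
      fun hji => h.not_adj_y_of_complete hS hcompl hk hj hi hl ⟨hykl, hji⟩⟩

theorem IsCycleFactor.deg_x_eq_of_apply_eq_self (hf : IsCycleFactor A x y φ ψ)
    (hb : IndexedBipartite A x y) {i₀ : Fin a} (hfix : (ψ * φ) i₀ = i₀) :
    deg A (x i₀) = 2 + ∑ j ∈ {i₀}ᶜ, arcsBetween A (x i₀) (y (φ j)) := by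
  rw [hb.deg_eq_sum, ← Equiv.sum_comp φ, ← sum_add_sum_compl {i₀}, sum_singleton,
    hf.arcsBetween_eq_two_of_apply_eq_self hfix]

theorem IsCycleFactor.deg_y_eq_of_apply_eq_self (hf : IsCycleFactor A x y φ ψ)
    (hb : IndexedBipartite A x y) {i₀ : Fin a} (hfix : (ψ * φ) i₀ = i₀) :
    deg A (y (φ i₀)) = 2 + ∑ j ∈ {i₀}ᶜ, arcsBetween A (y (φ i₀)) (x j) := by
  rw [hb.symm.deg_eq_sum, ← sum_add_sum_compl {i₀}, sum_singleton, arcsBetween_comm,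
    hf.arcsBetween_eq_two_of_apply_eq_self hfix]

theorem IsMaxCycleFactor.deg_add_deg_le_of_apply_eq_self (h : IsMaxCycleFactor A x y φ ψ)
    (hb : IndexedBipartite A x y) {i₀ : Fin a} (hfix : (ψ * φ) i₀ = i₀) :
    deg A (x i₀) + deg A (y (φ i₀)) ≤ 2 * a + 2 := by
  have hcross := h.sum_cross_le (apply_mem_singleton_iff_of_apply_eq_self hfix)
  have hC := (card_compl_singleton_add_one i₀).trans (Fintype.card_fin a)
  simp only [sum_singleton, card_singleton, one_mul, sum_add_distrib] at hcross
  rw [h.1.deg_x_eq_of_apply_eq_self hb hfix, h.1.deg_y_eq_of_apply_eq_self hb hfix]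
  omega

theorem IsMaxCycleFactor.arcsBetween_eq_one_of_apply_eq_self (h : IsMaxCycleFactor A x y φ ψ)
    (hb : IndexedBipartite A x y) (ha : 3 ≤ a)
    (hx : ∀ i j, i ≠ j → 3 * a ≤ deg A (x i) + deg A (x j))
    (hy : ∀ m n, m ≠ n → 3 * a ≤ deg A (y m) + deg A (y n)) {i₀ : Fin a}
    (hfix : (ψ * φ) i₀ = i₀) {j : Fin a} (hj : j ≠ i₀) :
    arcsBetween A (x i₀) (y (φ j)) = 1 ∧ arcsBetween A (y (φ i₀)) (x j) = 1 := by
  have hC := (card_compl_singleton_add_one i₀).trans (Fintype.card_fin a)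
  have hcross := h.sum_cross_le (apply_mem_singleton_iff_of_apply_eq_self hfix)
  simp only [sum_singleton, card_singleton, one_mul, sum_add_distrib] at hcross
  have hdx := h.1.deg_x_eq_of_apply_eq_self hb hfix
  have hdy := h.1.deg_y_eq_of_apply_eq_self hb hfix
  refine forall_eq_one_of_card_add_one_le (by omega) (fun _ => arcsBetween_le_two _ _)
    (fun _ => arcsBetween_le_two _ _) hcross (fun k hk => ?_) (fun k hk => ?_) j (by simpa using hj)
  · have := hx i₀ k (by simpa [eq_comm] using hk)
    have := hb.deg_le_add k (φ i₀)
    rw [arcsBetween_comm] at this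
    omega
  · have := hy (φ i₀) (φ k) (φ.injective.ne (by simpa [eq_comm] using hk))
    have := hb.symm.deg_le_add (φ k) i₀
    rw [arcsBetween_comm] at this
    omega


theorem IsMaxCycleFactor.mapsTo_of_apply_eq_self (h : IsMaxCycleFactor A x y φ ψ)
    (hb : IndexedBipartite A x y) (ha : 3 ≤ a)
    (hx : ∀ i j, i ≠ j → 3 * a ≤ deg A (x i) + deg A (x j))
    (hy : ∀ m n, m ≠ n → 3 * a ≤ deg A (y m) + deg A (y n)) {i₀ : Fin a}
    (hfix : (ψ * φ) i₀ = i₀) :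
    Set.MapsTo (ψ * φ) {j | j ≠ i₀ ∧ A (y (φ j)) (x i₀)} {j | j ≠ i₀ ∧ A (y (φ j)) (x i₀)} := by
  rintro j ⟨hj, hji⟩
  set π := ψ * φ
  have hπj : π j ≠ i₀ := fun e => hj (π.injective (e.trans hfix.symm))
  have hone := h.arcsBetween_eq_one_of_apply_eq_self hb ha hx hy hfix hπj
  have h₁ : ¬ A (y (φ i₀)) (x (π j)) := fun h' =>
    h.not_adj_y (fun e => hj (e.eq_of_left hfix).symm) ⟨h', by rwa [hfix]⟩
  have h₂ : ¬ A (x i₀) (y (φ (π j))) := fun h' =>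
    h.not_adj_x (fun e => hπj (e.eq_of_left hfix).symm)
      ⟨h', adj_of_arcsBetween_eq_one hone.2 h₁⟩
  exact ⟨hπj, adj_of_arcsBetween_eq_one hone.1 h₂⟩

theorem IsMaxCycleFactor.exists_not_sameCycle_of_apply_eq_self (h : IsMaxCycleFactor A x y φ ψ)
    (hb : IndexedBipartite A x y) (hs : StrongConn A) (ha : 3 ≤ a)
    (hx : ∀ i j, i ≠ j → 3 * a ≤ deg A (x i) + deg A (x j))
    (hy : ∀ m n, m ≠ n → 3 * a ≤ deg A (y m) + deg A (y n)) {i₀ : Fin a}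
    (hfix : (ψ * φ) i₀ = i₀) : ∃ i j, i ≠ i₀ ∧ j ≠ i₀ ∧ ¬ (ψ * φ).SameCycle i j := by
  by_contra! hC
  set π := ψ * φ
  have hone := fun {j} => h.arcsBetween_eq_one_of_apply_eq_self hb ha hx hy hfix (j := j)
  have hmaps := h.mapsTo_of_apply_eq_self hb ha hx hy hfix
  obtain ⟨j₁, hj₁⟩ := Fintype.exists_ne_of_one_lt_card (by simp only [Fintype.card_fin]; omega) i₀
  by_cases hj₁i₀ : A (y (φ j₁)) (x i₀)
  · -- then no arc leaves the 2-cycle `x i₀ ⇄ y (φ i₀)`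
    have hall : ∀ j ≠ i₀, A (y (φ j)) (x i₀) := fun j hj =>
      ((hC j₁ j hj₁ hj).mem_of_mapsTo hmaps ⟨hj₁, hj₁i₀⟩).2
    obtain ⟨k, hk, l, hl, hkl⟩ := hb.exists_arc_leaving hs φ (mem_singleton_self i₀)
      (j := j₁) (by simpa using hj₁)
    rw [mem_singleton] at hk hl
    rw [hk] at hkl
    rcases hkl with hkl | hkl
    · exact not_adj_of_arcsBetween_eq_one (hone hl).1 hkl (hall l hl)
    · obtain ⟨m, rfl⟩ := π.surjective l
      have hm : m ≠ i₀ := fun e => hl (e ▸ hfix)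
      exact h.not_adj_y (fun e => hm (e.eq_of_left hfix).symm) ⟨hkl, by rw [hfix]; exact hall m hm⟩
  · -- then no arc enters it
    have hnone : ∀ j ≠ i₀, ¬ A (y (φ j)) (x i₀) := fun j hj hji =>
      hj₁i₀ ((hC j j₁ hj hj₁).mem_of_mapsTo hmaps ⟨hj, hji⟩).2
    obtain ⟨k, hk, l, hl, hkl⟩ := hb.exists_arc_leaving hs φ (S := {i₀}ᶜ) (by simpa using hj₁)
      (j := i₀) (by simp)
    rw [mem_compl, mem_singleton] at hk
    rw [notMem_compl, mem_singleton] at hl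
    rw [hl] at hkl
    rcases hkl with hkl | hkl
    · exact hnone k hk (adj_of_arcsBetween_eq_one (hone hk).1 fun h' =>
        h.not_adj_x (fun e => hk (e.eq_of_left hfix).symm) ⟨h', hkl⟩)
    · exact hnone k hk hkl


theorem IsMaxCycleFactor.forall_sameCycle (h : IsMaxCycleFactor A x y φ ψ)
    (hb : IndexedBipartite A x y) (hs : StrongConn A) (ha : 3 ≤ a)
    (hx : ∀ i j, i ≠ j → 3 * a ≤ deg A (x i) + deg A (x j))
    (hy : ∀ m n, m ≠ n → 3 * a ≤ deg A (y m) + deg A (y n)) (i j : Fin a) :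
    (ψ * φ).SameCycle i j := by
  set π := ψ * φ
  set O : Fin a → Finset (Fin a) := fun i => {j | π.SameCycle i j}
  have hO : ∀ i k, π k ∈ O i ↔ k ∈ O i := fun i k => by
    simp only [O, mem_filter, mem_univ, true_and]
    exact sameCycle_apply_right
  have hsmall := fun i => h.card_lt_two_or_card_compl_lt_two hb hs hx hy (hO i)
  have hfixed : ∀ (S : Finset (Fin a)) k, (∀ m, π m ∈ S ↔ m ∈ S) → k ∈ S → #S < 2 → π k = k :=
    fun S k hS hk hS1 => card_le_one.1 (by omega) _ ((hS k).2 hk) _ hk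
  have htwo : ∀ i j, i ≠ j → π i = i → π j = j → False := fun i j hij hi hj => by
    have := h.deg_add_deg_le_of_apply_eq_self hb hi
    have := h.deg_add_deg_le_of_apply_eq_self hb hj
    have := hx i j hij
    have := hy (φ i) (φ j) (φ.injective.ne hij)
    omega
  by_contra hij
  obtain ⟨i₀, hfix⟩ : ∃ i₀, π i₀ = i₀ := by
    rcases hsmall i with h1 | h1
    · exact ⟨i, hfixed _ i (hO i) (by simp [O, SameCycle.refl]) h1⟩
    · exact ⟨j, hfixed _ j (fun m => by rw [mem_compl, mem_compl, hO]) (by simpa [O] using hij) h1⟩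
  obtain ⟨u, v, hu, hv, huv⟩ := h.exists_not_sameCycle_of_apply_eq_self hb hs ha hx hy hfix
  rcases hsmall u with h1 | h1
  · exact htwo u i₀ hu (hfixed _ u (hO u) (by simp [O, SameCycle.refl]) h1) hfix
  · have : 1 < #(O u)ᶜ := one_lt_card.2 ⟨v, by simpa [O] using huv, i₀,
      by simpa [O] using fun e => hu (e.eq_of_right hfix), hv⟩
    omega

end Counting

end CycleFactor

theorem BipartiteWith.exists_indexedBipartite {V : Type*} [Fintype V] [DecidableEq V]
    {A : V → V → Prop} {X Y : Finset V} {a : ℕ} (hbip : BipartiteWith A X Y) (hX : #X = a)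
    (hY : #Y = a) :
    ∃ x y : Fin a → V, IndexedBipartite A x y ∧ (∀ i, x i ∈ X) ∧ ∀ m, y m ∈ Y := by
  set eX := X.equivFinOfCardEq hX
  set eY := Y.equivFinOfCardEq hY
  have hxs : ∀ v (hv : v ∈ X), v = eX.symm (eX ⟨v, hv⟩) := by simp
  have hys : ∀ v (hv : v ∈ Y), v = eY.symm (eY ⟨v, hv⟩) := by simp
  refine ⟨fun i => eX.symm i, fun m => eY.symm m, ⟨Subtype.val_injective.comp eX.symm.injective,
    Subtype.val_injective.comp eY.symm.injective, fun i m e => ?_, fun v => ?_,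
    fun u v huv => ?_⟩, fun i => (eX.symm i).2, fun m => (eY.symm m).2⟩
  · exact disjoint_left.1 hbip.1 (eX.symm i).2 (by simp only at e; exact e ▸ (eY.symm m).2)
  · rcases mem_union.1 (hbip.2.1 ▸ mem_univ v) with hv | hv
    exacts [.inl ⟨_, hxs v hv⟩, .inr ⟨_, hys v hv⟩]
  · rcases hbip.2.2 u v huv with ⟨hu, hv⟩ | ⟨hu, hv⟩
    exacts [.inl ⟨_, _, hxs u hu, hys v hv⟩, .inr ⟨_, _, hys u hu, hxs v hv⟩]

theorem stmt15_general {V : Type*} [Fintype V] [DecidableEq V] (A : V → V → Prop) [DecidableRel A]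
    (a : ℕ) (ha : 3 ≤ a) (X Y : Finset V)
    (hX : X.card = a) (hY : Y.card = a)
    (hbip : BipartiteWith A X Y) (hstrong : StrongConn A)
    (hdeg : ∀ u v : V, u ≠ v → ((u ∈ X ∧ v ∈ X) ∨ (u ∈ Y ∧ v ∈ Y)) →
      3 * a ≤ deg A u + deg A v) :
    HasCycle A (2 * a) := by
  obtain ⟨x, y, hb, hxX, hyY⟩ := hbip.exists_indexedBipartite hX hY
  have hx : ∀ i j, i ≠ j → 3 * a ≤ deg A (x i) + deg A (x j) := fun i j hij =>
    hdeg _ _ (hb.1.ne hij) (.inl ⟨hxX i, hxX j⟩)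
  have hy : ∀ m n, m ≠ n → 3 * a ≤ deg A (y m) + deg A (y n) := fun m n hmn =>
    hdeg _ _ (hb.2.1.ne hmn) (.inr ⟨hyY m, hyY n⟩)
  obtain ⟨φ, hφ⟩ := hb.exists_perm_adj hstrong hx hy
  obtain ⟨ψ, hψ⟩ := hb.symm.exists_perm_adj hstrong hy hx
  obtain ⟨φ, ψ, hmax⟩ := IsCycleFactor.exists_isMaxCycleFactor (A := A) ⟨hφ, hψ⟩
  exact hmax.1.hasCycle hb (by omega) (hmax.forall_sameCycle hb hstrong ha hx hy)

/-- Hamiltonicity (case k = a of the main theorem). -/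
theorem stmt15 {V : Type*} [Fintype V] [DecidableEq V] (A : V → V → Prop) [DecidableRel A]
    (a : ℕ) (ha : 3 ≤ a) (X Y : Finset V)
    (hcard : Fintype.card V = 2 * a) (hX : X.card = a) (hY : Y.card = a)
    (hbip : BipartiteWith A X Y) (hstrong : StrongConn A)
    (hdeg : ∀ u v : V, u ≠ v → ((u ∈ X ∧ v ∈ X) ∨ (u ∈ Y ∧ v ∈ Y)) →
      3 * a ≤ deg A u + deg A v) :
    HasCycle A (2 * a) :=
  stmt15_general A a ha X Y hX hY hbip hstrong hdeg
end

section
/- Let D be a strongly connected balanced bipartite digraph of order 2a ≥ 6 with partite sets X and Y. Suppose there is a vertex x_1 ∈ X with out-degree 1, say with unique out-neighbor y_1, such that d(x_1) = a, and every other vertex x ∈ X \ {x_1} satisfies d(x) ≥ 2a. Then D contains cycles of every even length 2, 4, ..., 2a. -/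
open Finset

/-! A vertex `x ≠ x₁` of `X` has degree at least `2a`, the maximum possible, so it is joined in
both directions to every vertex of `Y`. As `x₁` has in-degree `a - 1 ≥ 2`, some `y' ≠ y₁`
dominates `x₁`, and for `2 ≤ k ≤ a` a cycle of length `2k` leaves `x₁` through `y₁`, alternates
between `X \ {x₁}` and `Y \ {y₁, y'}`, and returns through `y'`. A `2`-cycle is `x y₁ x` for
any `x ≠ x₁`. -/

open Function

section Cycles

variable {V : Type*} {A : V → V → Prop}

theorem hasCycle_of_injective_fin {n : ℕ} [NeZero n] (hn : 2 ≤ n) (f : Fin n → V)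
    (hf : Injective f) (hA : ∀ i, A (f i) (f (i + 1))) : HasCycle A n := by
  refine ⟨hn, f ∘ (ZMod.finEquiv n).symm, hf.comp (ZMod.finEquiv n).symm.injective, fun z => ?_⟩
  simpa only [comp_apply, map_add, map_one] using hA ((ZMod.finEquiv n).symm z)

theorem hasCycle_two_mul_of_alternating {k : ℕ} (p q : Fin (k + 1) → V) (hp : Injective p)
    (hq : Injective q) (hdisj : ∀ i j, p i ≠ q j) (hpq : ∀ i, A (p i) (q i))
    (hqp : ∀ i : Fin k, A (q i.castSucc) (p i.succ)) (hlast : A (q (Fin.last k)) (p 0)) :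
    HasCycle A (2 * (k + 1)) := by
  let f : Fin (2 * k + 1 + 1) → V := fun j =>
    if (j : ℕ) % 2 = 0 then p ⟨j / 2, by omega⟩ else q ⟨j / 2, by omega⟩
  refine hasCycle_of_injective_fin (by omega) f (fun i j hij => ?_) (fun j => ?_)
  · have key : (i : ℕ) / 2 = j / 2 ∧ ((i : ℕ) % 2 = 0 ↔ (j : ℕ) % 2 = 0) := by
      by_cases hi : (i : ℕ) % 2 = 0 <;> by_cases hj : (j : ℕ) % 2 = 0 <;>
        simp only [f, hi, hj, if_true, if_false] at hij
      · exact ⟨congrArg Fin.val (hp hij), by simp [hi, hj]⟩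
      · exact absurd hij (hdisj _ _)
      · exact absurd hij.symm (hdisj _ _)
      · exact ⟨congrArg Fin.val (hq hij), by simp [hi, hj]⟩
    ext
    omega
  · by_cases hj : j = Fin.last _
    · subst hj
      have hk : (2 * k + 1) / 2 = k := by omega
      rw [Fin.last_add_one]
      simpa [f, Nat.mul_add_mod, hk, Fin.last] using hlast
    · have hsucc : ((j + 1 : Fin _) : ℕ) = j + 1 :=
        Fin.val_add_one_of_lt (Fin.lt_last_iff_ne_last.mpr hj)
      have hj' : (j : ℕ) < 2 * k + 1 := Fin.val_lt_last hj
      by_cases hpar : (j : ℕ) % 2 = 0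
      · have hpar' : ((j : ℕ) + 1) % 2 ≠ 0 := by omega
        simp only [f, hsucc, hpar, hpar', if_true, if_false]
        convert hpq ⟨j / 2, by omega⟩ using 3
        omega
      · have hpar' : ((j : ℕ) + 1) % 2 = 0 := by omega
        simp only [f, hsucc, hpar, hpar', if_true, if_false]
        convert hqp ⟨j / 2, by omega⟩ using 2
        · ext; simp
        · ext; simp; omega

theorem hasCycle_two {u v : V} (huv : u ≠ v) (h₁ : A u v) (h₂ : A v u) : HasCycle A 2 :=
  hasCycle_two_mul_of_alternating (k := 0) (fun _ => u) (fun _ => v)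
    (fun _ _ _ => Subsingleton.elim (α := Fin 1) _ _)
    (fun _ _ _ => Subsingleton.elim (α := Fin 1) _ _) (fun _ _ => huv)
    (fun _ => h₁) Fin.elim0 h₂

end Cycles

theorem Finset.exists_injective_fin_of_le_card {V : Type*} {s : Finset V} {n : ℕ}
    (h : n ≤ s.card) : ∃ f : Fin n → V, Injective f ∧ ∀ i, f i ∈ s :=
  ⟨fun i => s.equivFin.symm (Fin.castLE h i),
    Subtype.val_injective.comp (s.equivFin.symm.injective.comp (Fin.castLE_injective h)),
    fun _ => (s.equivFin.symm _).2⟩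

namespace BipartiteWith

variable {V : Type*} [Fintype V] [DecidableEq V] {A : V → V → Prop} [DecidableRel A]
  {X Y : Finset V}

theorem filter_adj_subset (h : BipartiteWith A X Y) {x : V} (hx : x ∈ X) :
    univ.filter (fun v => A x v) ⊆ Y := fun v hv =>
  ((h.2.2 x v (mem_filter.1 hv).2).resolve_right fun h' => disjoint_left.1 h.1 hx h'.1).2

theorem filter_adj_in_subset (h : BipartiteWith A X Y) {x : V} (hx : x ∈ X) :
    univ.filter (fun v => A v x) ⊆ Y := fun v hv =>
  ((h.2.2 v x (mem_filter.1 hv).2).resolve_left fun h' => disjoint_left.1 h.1 hx h'.2).1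

theorem adj_and_adj_of_two_mul_card_le_deg (h : BipartiteWith A X Y) {x : V} (hx : x ∈ X)
    (hdeg : 2 * Y.card ≤ deg A x) {y : V} (hy : y ∈ Y) : A x y ∧ A y x := by
  have hout := card_le_card (h.filter_adj_subset hx)
  have hin := card_le_card (h.filter_adj_in_subset hx)
  unfold deg outDeg inDeg at hdeg
  have hout_eq := eq_of_subset_of_card_le (h.filter_adj_subset hx) (by omega)
  have hin_eq := eq_of_subset_of_card_le (h.filter_adj_in_subset hx) (by omega)
  simp only [Finset.ext_iff, mem_filter, mem_univ, true_and] at hout_eq hin_eq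
  exact ⟨(hout_eq y).2 hy, (hin_eq y).2 hy⟩

end BipartiteWith

/-- The cycle `x₀ → y₀ → u 0 → w 0 → ⋯ → w (m - 1) → u m → y₁ → x₀`, where the `u i` are
distinct vertices of `X \ {x₀}` and the `w i` distinct vertices of `Y \ {y₀, y₁}`. -/
theorem hasCycle_two_mul_add_two_of_detour {V : Type*} [DecidableEq V] {A : V → V → Prop}
    {X Y : Finset V} (hXY : Disjoint X Y) {x₀ y₀ y₁ : V} (hx₀ : x₀ ∈ X) (hy₀ : y₀ ∈ Y)
    (hy₁ : y₁ ∈ Y) (hy : y₀ ≠ y₁) (h₀ : A x₀ y₀) (h₁ : A y₁ x₀)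
    (hcomp : ∀ x ∈ X, x ≠ x₀ → ∀ y ∈ Y, A x y ∧ A y x) {m : ℕ} (hmX : m + 2 ≤ X.card)
    (hmY : m + 2 ≤ Y.card) : HasCycle A (2 * (m + 2)) := by
  obtain ⟨u, hu, huX⟩ := (X.erase x₀).exists_injective_fin_of_le_card (n := m + 1)
    (by rw [card_erase_of_mem hx₀]; omega)
  obtain ⟨w, hw, hwY⟩ := ((Y.erase y₀).erase y₁).exists_injective_fin_of_le_card (n := m)
    (by rw [card_erase_of_mem (mem_erase.2 ⟨hy.symm, hy₁⟩), card_erase_of_mem hy₀]; omega)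
  simp only [mem_erase] at huX hwY
  set p : Fin (m + 2) → V := Fin.cons x₀ u
  set q : Fin (m + 2) → V := Fin.cons y₀ (Fin.snoc w y₁)
  have hpX : ∀ i, p i ∈ X := Fin.forall_fin_succ.2 ⟨hx₀, fun i => (huX i).2⟩
  have hqY : ∀ i, q i ∈ Y := Fin.forall_fin_succ.2
    ⟨hy₀, Fin.forall_fin_succ'.2 ⟨fun i => by simpa [q] using (hwY i).2.2, by simpa [q] using hy₁⟩⟩
  refine hasCycle_two_mul_of_alternating p q ?_ ?_
    (fun i j hij => disjoint_left.1 hXY (hpX i) (hij ▸ hqY j)) ?_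
    (fun i => (hcomp _ (huX i).2 (huX i).1 _ (hqY _)).2)
    (by simpa [p, q, ← Fin.succ_last] using h₁)
  · exact Fin.cons_injective_iff.2 ⟨fun ⟨i, hi⟩ => (huX i).1 hi, hu⟩
  · refine Fin.cons_injective_iff.2
      ⟨?_, Fin.snoc_injective_iff.2 ⟨hw, fun ⟨i, hi⟩ => (hwY i).1 hi⟩⟩
    rw [Fin.range_snoc]
    rintro (h | ⟨i, hi⟩)
    exacts [hy h, (hwY i).2.1 hi]
  · exact Fin.forall_fin_succ.2 ⟨h₀, fun i => (hcomp _ (huX i).2 (huX i).1 _ (hqY _)).1⟩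

theorem stmt16_general {V : Type*} [Fintype V] [DecidableEq V] (A : V → V → Prop) [DecidableRel A]
    (a : ℕ) (ha : 3 ≤ a) (X Y : Finset V)
    (hX : X.card = a) (hY : Y.card = a)
    (hbip : BipartiteWith A X Y)
    (x1 y1 : V) (hx1 : x1 ∈ X) (hy1 : y1 ∈ Y)
    (hout : outDeg A x1 = 1) (harc : A x1 y1)
    (hdx1 : deg A x1 = a)
    (hother : ∀ v ∈ X, v ≠ x1 → 2 * a ≤ deg A v) :
    ∀ k : ℕ, 1 ≤ k → k ≤ a → HasCycle A (2 * k) := by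
  intro k hk1 hka
  have hcomp : ∀ x ∈ X, x ≠ x1 → ∀ y ∈ Y, A x y ∧ A y x := fun x hx hne _ hy =>
    hbip.adj_and_adj_of_two_mul_card_le_deg hx (hY ▸ hother x hx hne) hy
  obtain rfl | ⟨m, rfl⟩ : k = 1 ∨ ∃ m, k = m + 2 := by
    exact (Nat.lt_or_ge k 2).imp (fun _ => by omega) (fun _ => ⟨k - 2, by omega⟩)
  · obtain ⟨x, hx, hne⟩ := exists_mem_ne (s := X) (by omega) x1
    have h := hcomp x hx hne y1 hy1
    exact hasCycle_two (ne_of_mem_of_not_mem hy1 (disjoint_left.1 hbip.1 hx)).symm h.1 h.2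
  · have hin : inDeg A x1 = a - 1 := by unfold deg at hdx1; omega
    obtain ⟨y', hy', hne⟩ :=
      exists_mem_ne (s := univ.filter (A · x1)) (by unfold inDeg at hin; omega) y1
    exact hasCycle_two_mul_add_two_of_detour hbip.1 hx1 hy1 (hbip.filter_adj_in_subset hx1 hy')
      hne.symm harc (mem_filter.1 hy').2 hcomp (by omega) (by omega)

/-- a vertex x₁ ∈ X with out-degree 1, degree a, all other
vertices of X of degree ≥ 2a — then D is even pancyclic. -/
theorem stmt16 {V : Type*} [Fintype V] [DecidableEq V] (A : V → V → Prop) [DecidableRel A]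
    (a : ℕ) (ha : 3 ≤ a) (X Y : Finset V)
    (hcard : Fintype.card V = 2 * a) (hX : X.card = a) (hY : Y.card = a)
    (hbip : BipartiteWith A X Y) (hstrong : StrongConn A)
    (x1 y1 : V) (hx1 : x1 ∈ X) (hy1 : y1 ∈ Y)
    (hout : outDeg A x1 = 1) (harc : A x1 y1)
    (hdx1 : deg A x1 = a)
    (hother : ∀ v ∈ X, v ≠ x1 → 2 * a ≤ deg A v) :
    ∀ k : ℕ, 1 ≤ k → k ≤ a → HasCycle A (2 * k) :=
  stmt16_general A a ha X Y hX hY hbip x1 y1 hx1 hy1 hout harc hdx1 hother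
end
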